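/- Let S = ⟨n_1, n_2⟩ with gcd(n_1,n_2) = 1, and let λ > μ > 2n_1n_2 - n_1 - n_2 be coprime integers. If λ > (n_2/n_1)μ + n_2(n_2 - n_1), then the gluing G = μS + λS is tasty; if λ < (n_2/n_1)μ - n_2(n_2 - n_1), then G is bland. -/
import Mathlib


open Finset

namespace LengthDensity

/-- The set of factorizations of `n` with respect to generators `g`. -/
def facs {k : ℕ} (g : Fin k → ℕ) (n : ℕ) : Set (Fin k → ℕ) :=
  {z | ∑ i, z i * g i = n}

/-- Membership in the numerical semigroup generated by `g`. -/
def mem {k : ℕ} (g : Fin k → ℕ) (n : ℕ) : Prop := (facs g n).Nonempty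

/-- The set of factorization lengths of `n`. -/
def lengthSet {k : ℕ} (g : Fin k → ℕ) (n : ℕ) : Set ℕ :=
  (fun z => ∑ i, z i) '' facs g n

/-- Length density of an element. -/
noncomputable def LD {k : ℕ} (g : Fin k → ℕ) (n : ℕ) : ℝ :=
  (((lengthSet g n).ncard : ℝ) - 1) /
    (((sSup (lengthSet g n) : ℕ) : ℝ) - ((sInf (lengthSet g n) : ℕ) : ℝ))

/-- Length density of the semigroup: infimum of `LD` over elements with
non-singleton length set. -/
noncomputable def LDsgp {k : ℕ} (g : Fin k → ℕ) : ℝ :=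
  sInf {x : ℝ | ∃ n : ℕ, 2 ≤ (lengthSet g n).ncard ∧ x = LD g n}

/-- The delta set (successive gaps) of a set of naturals. -/
def deltaOf (L : Set ℕ) : Set ℕ :=
  {d | ∃ a ∈ L, ∃ b ∈ L, a < b ∧ (∀ c ∈ L, ¬(a < c ∧ c < b)) ∧ d = b - a}

/-- The delta set of an element. -/
def delta {k : ℕ} (g : Fin k → ℕ) (n : ℕ) : Set ℕ := deltaOf (lengthSet g n)

/-- The delta set of the semigroup. -/
def Delta {k : ℕ} (g : Fin k → ℕ) : Set ℕ := ⋃ n : ℕ, delta g n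

/-- Adjacency in the factorization graph of `n`: two factorizations of `n`
sharing a positive coordinate. -/
def adj {k : ℕ} (g : Fin k → ℕ) (n : ℕ) (z z' : Fin k → ℕ) : Prop :=
  z ∈ facs g n ∧ z' ∈ facs g n ∧ ∃ i, 0 < z i ∧ 0 < z' i

/-- `n` is a Betti element: its factorization graph is disconnected. -/
def IsBetti {k : ℕ} (g : Fin k → ℕ) (n : ℕ) : Prop :=
  ∃ z ∈ facs g n, ∃ z' ∈ facs g n, ¬ Relation.ReflTransGen (adj g n) z z'

/-- The semigroup is tasty: `LD(S) > 1 / max Δ(S)`. -/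
def Tasty {k : ℕ} (g : Fin k → ℕ) : Prop := LDsgp g > 1 / ((sSup (Delta g) : ℕ) : ℝ)

/-- The semigroup is bland: `LD(S) = 1 / max Δ(S)`. -/
def Bland {k : ℕ} (g : Fin k → ℕ) : Prop := LDsgp g = 1 / ((sSup (Delta g) : ℕ) : ℝ)

/-- `g` is a minimal generating set: no generator is a nonnegative integer
combination of the others. -/
def IsMinGen {k : ℕ} (g : Fin k → ℕ) : Prop :=
  ∀ i, ¬ ∃ z : Fin k → ℕ, z i = 0 ∧ ∑ j, z j * g j = g i

/-- `n` is a non-atom of the semigroup generated by `g`: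
it is a sum of two nonzero elements. -/
def NonAtom {k : ℕ} (g : Fin k → ℕ) (n : ℕ) : Prop :=
  ∃ a b : ℕ, 0 < a ∧ 0 < b ∧ mem g a ∧ mem g b ∧ n = a + b



/-- Length set of `x` in the numerical semigroup `⟨n1, n2⟩`. -/
def Lp (n1 n2 x : ℕ) : Set ℕ := {ℓ | ∃ a b : ℕ, a * n1 + b * n2 = x ∧ a + b = ℓ}

section TwoGen

variable {n1 n2 : ℕ}

lemma mem_Lp_iff (h12 : n1 < n2) {x ℓ : ℕ} :
    ℓ ∈ Lp n1 n2 x ↔ n1 * ℓ ≤ x ∧ x ≤ n2 * ℓ ∧ (n2 - n1) ∣ (n2 * ℓ - x) := by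
  constructor
  · rintro ⟨a, b, hab, rfl⟩
    have h1 : n1 * (a + b) ≤ x := by nlinarith
    have h2 : x ≤ n2 * (a + b) := by nlinarith
    refine ⟨h1, h2, ⟨a, ?_⟩⟩
    have : n2 * (a + b) = x + (n2 - n1) * a := by
      have hd : n1 + (n2 - n1) = n2 := by omega
      nlinarith [hd]
    omega
  · rintro ⟨h1, h2, k, hk⟩
    -- n2 * ℓ - x = (n2 - n1) * k
    have hd : n1 + (n2 - n1) = n2 := by omega
    have hk' : n2 * ℓ = x + (n2 - n1) * k := by omega
    have hkl : k ≤ ℓ := by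
      by_contra h
      push_neg at h
      have : (n2 - n1) * ℓ < (n2 - n1) * k := by
        exact (mul_lt_mul_iff_right₀ (by omega : 0 < n2 - n1)).mpr h
      nlinarith
    refine ⟨k, ℓ - k, ?_, by omega⟩
    have : k * n1 + (ℓ - k) * n2 + (n2 - n1) * k = x + (n2 - n1) * k := by
      rw [← hk']
      have h3 : k * n1 + (n2 - n1) * k = k * n2 := by nlinarith [hd]
      have h4 : k * n2 + (ℓ - k) * n2 = ℓ * n2 := by
        have : k + (ℓ - k) = ℓ := by omega
        nlinarith [this]
      nlinarith
    omega

lemma Lp_subset_Iic (h1 : 1 ≤ n1) (h12 : n1 < n2) {x : ℕ} : Lp n1 n2 x ⊆ Set.Iic x := by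
  rintro ℓ ⟨a, b, hab, rfl⟩
  have : a * 1 + b * 1 ≤ a * n1 + b * n2 := by
    gcongr <;> omega
  simp only [Set.mem_Iic]; omega

lemma Lp_finite (h1 : 1 ≤ n1) (h12 : n1 < n2) (x : ℕ) : (Lp n1 n2 x).Finite :=
  Set.Finite.subset (Set.finite_Iic x) (Lp_subset_Iic h1 h12)

lemma Lp_bddAbove (h1 : 1 ≤ n1) (h12 : n1 < n2) (x : ℕ) : BddAbove (Lp n1 n2 x) :=
  (Lp_finite h1 h12 x).bddAbove

/-- min length -/
noncomputable def mL (n1 n2 x : ℕ) : ℕ := sInf (Lp n1 n2 x)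
/-- max length -/
noncomputable def xL (n1 n2 x : ℕ) : ℕ := sSup (Lp n1 n2 x)

lemma mL_mem {x : ℕ} (hx : (Lp n1 n2 x).Nonempty) : mL n1 n2 x ∈ Lp n1 n2 x :=
  Nat.sInf_mem hx

lemma xL_mem (h1 : 1 ≤ n1) (h12 : n1 < n2) {x : ℕ} (hx : (Lp n1 n2 x).Nonempty) : xL n1 n2 x ∈ Lp n1 n2 x :=
  Nat.sSup_mem hx (Lp_bddAbove h1 h12 x)

lemma mL_le {x ℓ : ℕ} (hℓ : ℓ ∈ Lp n1 n2 x) : mL n1 n2 x ≤ ℓ := Nat.sInf_le hℓ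

lemma le_xL (h1 : 1 ≤ n1) (h12 : n1 < n2) {x ℓ : ℕ} (hℓ : ℓ ∈ Lp n1 n2 x) : ℓ ≤ xL n1 n2 x :=
  le_csSup (Lp_bddAbove h1 h12 x) hℓ

lemma Lp_add_mem {x y ℓ ℓ' : ℕ} (hℓ : ℓ ∈ Lp n1 n2 x) (hℓ' : ℓ' ∈ Lp n1 n2 y) :
    ℓ + ℓ' ∈ Lp n1 n2 (x + y) := by
  obtain ⟨a, b, hab, rfl⟩ := hℓ
  obtain ⟨c, d, hcd, rfl⟩ := hℓ'
  exact ⟨a + c, b + d, by ring_nf; omega, by ring⟩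

lemma mL_add {x y : ℕ} (hx : (Lp n1 n2 x).Nonempty) (hy : (Lp n1 n2 y).Nonempty) :
    mL n1 n2 (x + y) ≤ mL n1 n2 x + mL n1 n2 y :=
  mL_le (Lp_add_mem (mL_mem hx) (mL_mem hy))

lemma xL_add (h1 : 1 ≤ n1) (h12 : n1 < n2) {x y : ℕ} (hx : (Lp n1 n2 x).Nonempty)
    (hy : (Lp n1 n2 y).Nonempty) :
    xL n1 n2 x + xL n1 n2 y ≤ xL n1 n2 (x + y) :=
  le_xL h1 h12 (Lp_add_mem (xL_mem h1 h12 hx) (xL_mem h1 h12 hy))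

lemma mL_le_xL (h1 : 1 ≤ n1) (h12 : n1 < n2) {x : ℕ} (hx : (Lp n1 n2 x).Nonempty) :
    mL n1 n2 x ≤ xL n1 n2 x := le_xL h1 h12 (mL_mem hx)

end TwoGen


section TwoGen

variable {n1 n2 : ℕ}

/-- basic bounds from membership -/
lemma Lp_bounds (h12 : n1 < n2) {x ℓ : ℕ} (hℓ : ℓ ∈ Lp n1 n2 x) :
    n1 * ℓ ≤ x ∧ x ≤ n2 * ℓ := by
  have := (mem_Lp_iff h12).mp hℓ
  exact ⟨this.1, this.2.1⟩

/-- descent: if `n2 * (ℓ - d0) ≥ x` then `ℓ - d0` is also a length. -/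
lemma Lp_descent (h12 : n1 < n2) {x ℓ : ℕ} (hℓ : ℓ ∈ Lp n1 n2 x)
    (h : x + n2 * (n2 - n1) ≤ n2 * ℓ) : ℓ - (n2 - n1) ∈ Lp n1 n2 x := by
  rw [mem_Lp_iff h12] at hℓ ⊢
  obtain ⟨ha, hb, hd⟩ := hℓ
  have hℓd : n2 - n1 ≤ ℓ := by nlinarith [Nat.sub_le n2 n1]
  have e1 : n2 * (ℓ - (n2 - n1)) = n2 * ℓ - n2 * (n2 - n1) := by
    rw [Nat.mul_sub]
  refine ⟨?_, by omega, ?_⟩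
  · calc n1 * (ℓ - (n2 - n1)) ≤ n1 * ℓ := by gcongr; omega
    _ ≤ x := ha
  · have : n2 * (ℓ - (n2 - n1)) - x = (n2 * ℓ - x) - n2 * (n2 - n1) := by omega
    rw [this]
    exact Nat.dvd_sub hd ⟨n2, by ring⟩

/-- ascent towards another member -/
lemma Lp_ascent (h12 : n1 < n2) {x ℓ : ℕ} (hℓ : ℓ ∈ Lp n1 n2 x)
    (h : n1 * (ℓ + (n2 - n1)) ≤ x) : ℓ + (n2 - n1) ∈ Lp n1 n2 x := by
  rw [mem_Lp_iff h12] at hℓ ⊢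
  obtain ⟨ha, hb, hd⟩ := hℓ
  refine ⟨h, by nlinarith, ?_⟩
  have : n2 * (ℓ + (n2 - n1)) - x = (n2 * ℓ - x) + n2 * (n2 - n1) := by
    have : n2 * (ℓ + (n2 - n1)) = n2 * ℓ + n2 * (n2 - n1) := by ring
    omega
  rw [this]
  exact Nat.dvd_add hd ⟨n2, by ring⟩

/-- P3b: `n2 * mL x < x + n2 * d0` for nonempty `Lp`. -/
lemma mL_upper (h12 : n1 < n2) {x : ℕ} (hx : (Lp n1 n2 x).Nonempty) :
    n2 * mL n1 n2 x < x + n2 * (n2 - n1) := by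
  by_contra h
  push_neg at h
  have h2 := Lp_descent h12 (mL_mem hx) h
  have := mL_le h2
  have hpos : 0 < mL n1 n2 x := by
    rcases Nat.eq_zero_or_pos (mL n1 n2 x) with h0 | h0
    · rw [h0] at h; simp at h; omega
    · exact h0
  omega

/-- P3c: `x < n1 * xL x + n1 * d0`. -/
lemma xL_lower (h1 : 1 ≤ n1) (h12 : n1 < n2) {x : ℕ} (hx : (Lp n1 n2 x).Nonempty) :
    x < n1 * xL n1 n2 x + n1 * (n2 - n1) := by
  by_contra h
  push_neg at h
  have h2 : n1 * (xL n1 n2 x + (n2 - n1)) ≤ x := by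
    have : n1 * (xL n1 n2 x + (n2 - n1)) = n1 * xL n1 n2 x + n1 * (n2 - n1) := by ring
    omega
  have h3 := Lp_ascent h12 (xL_mem h1 h12 hx) h2
  have := le_xL h1 h12 h3
  omega

lemma mL_bounds (h12 : n1 < n2) {x : ℕ} (hx : (Lp n1 n2 x).Nonempty) :
    x ≤ n2 * mL n1 n2 x := (Lp_bounds h12 (mL_mem hx)).2

lemma xL_bounds (h1 : 1 ≤ n1) (h12 : n1 < n2) {x : ℕ} (hx : (Lp n1 n2 x).Nonempty) :
    n1 * xL n1 n2 x ≤ x := (Lp_bounds h12 (xL_mem h1 h12 hx)).1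

/-- residues: two lengths of the same `x` differ by a multiple of `d0`. -/
lemma Lp_dvd_sub (h12 : n1 < n2) (hcop : Nat.Coprime n1 n2) {x ℓ ℓ' : ℕ}
    (hℓ : ℓ ∈ Lp n1 n2 x) (hℓ' : ℓ' ∈ Lp n1 n2 x) (hle : ℓ' ≤ ℓ) :
    (n2 - n1) ∣ (ℓ - ℓ') := by
  rw [mem_Lp_iff h12] at hℓ hℓ'
  obtain ⟨ha, hb, hd⟩ := hℓ
  obtain ⟨ha', hb', hd'⟩ := hℓ'
  have h2 : (n2 - n1) ∣ (n2 * ℓ - x) - (n2 * ℓ' - x) := Nat.dvd_sub hd hd'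
  have e : (n2 * ℓ - x) - (n2 * ℓ' - x) = n2 * (ℓ - ℓ') := by
    have : n2 * (ℓ - ℓ') = n2 * ℓ - n2 * ℓ' := by rw [Nat.mul_sub]
    omega
  rw [e] at h2
  have hco : Nat.Coprime (n2 - n1) n2 := by
    have h3 : Nat.gcd (n2 - n1) n2 ∣ n1 := by
      have d1 : Nat.gcd (n2 - n1) n2 ∣ n2 - n1 := Nat.gcd_dvd_left _ _
      have d2 : Nat.gcd (n2 - n1) n2 ∣ n2 := Nat.gcd_dvd_right _ _
      have h5 : n2 - (n2 - n1) = n1 := by omega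
      have h6 := Nat.dvd_sub d2 d1
      rwa [h5] at h6
    have h4 : Nat.gcd (n2 - n1) n2 ∣ Nat.gcd n1 n2 := Nat.dvd_gcd h3 (Nat.gcd_dvd_right _ _)
    rw [hcop] at h4
    exact Nat.eq_one_of_dvd_one h4
  exact hco.dvd_of_dvd_mul_left h2

/-- fullness P2 -/
lemma Lp_full (h1 : 1 ≤ n1) (h12 : n1 < n2) (hcop : Nat.Coprime n1 n2) {x ℓ : ℕ}
    (hx : (Lp n1 n2 x).Nonempty) (h1' : mL n1 n2 x ≤ ℓ) (h2' : ℓ ≤ xL n1 n2 x)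
    (hdvd : (n2 - n1) ∣ (ℓ - mL n1 n2 x)) : ℓ ∈ Lp n1 n2 x := by
  obtain ⟨k, hk⟩ := hdvd
  have hℓ : ℓ = mL n1 n2 x + (n2 - n1) * k := by omega
  clear hk h1'
  subst hℓ
  induction k with
  | zero => simpa using mL_mem hx
  | succ k ih =>
    have hk' : mL n1 n2 x + (n2 - n1) * k ≤ xL n1 n2 x := by
      have : (n2 - n1) * k ≤ (n2 - n1) * (k + 1) := by gcongr <;> omega
      omega
    have hmem := ih hk'
    have : n1 * (mL n1 n2 x + (n2 - n1) * k + (n2 - n1)) ≤ x := by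
      calc n1 * (mL n1 n2 x + (n2 - n1) * k + (n2 - n1))
          = n1 * (mL n1 n2 x + (n2 - n1) * (k + 1)) := by ring
        _ ≤ n1 * xL n1 n2 x := by gcongr
        _ ≤ x := xL_bounds h1 h12 hx
    have := Lp_ascent h12 hmem this
    convert this using 1
    ring

/-- P5 -/
lemma dvd_xL_sub_mL (h1 : 1 ≤ n1) (h12 : n1 < n2) (hcop : Nat.Coprime n1 n2) {x : ℕ}
    (hx : (Lp n1 n2 x).Nonempty) : (n2 - n1) ∣ (xL n1 n2 x - mL n1 n2 x) :=
  Lp_dvd_sub h12 hcop (xL_mem h1 h12 hx) (mL_mem hx) (mL_le_xL h1 h12 hx)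

/-- P7: Chicken McNugget -/
lemma Lp_nonempty_of_big (h1 : 1 < n1) (h12 : n1 < n2) (hcop : Nat.Coprime n1 n2) {x : ℕ}
    (hx : n1 * n2 - n1 - n2 < x) : (Lp n1 n2 x).Nonempty := by
  have h2 : 1 < n2 := lt_trans h1 h12
  have hf := frobeniusNumber_pair hcop h1 h2
  rcases Classical.em (x ∈ AddSubmonoid.closure ({n1, n2} : Set ℕ)) with hm | hm
  · rw [AddSubmonoid.mem_closure_pair] at hm
    obtain ⟨a, b, hab⟩ := hm
    exact ⟨a + b, a, b, by simpa [smul_eq_mul] using hab, rfl⟩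
  · exact absurd (hf.2 hm) (by omega)

/-- P6: two lengths -/
lemma mL_lt_xL_of_big (h1 : 1 < n1) (h12 : n1 < n2) (hcop : Nat.Coprime n1 n2) {x : ℕ}
    (hx : 2 * n1 * n2 - n1 - n2 < x) : mL n1 n2 x < xL n1 n2 x := by
  have h2 : 1 < n2 := lt_trans h1 h12
  have key : n1 + n2 ≤ n1 * n2 := by nlinarith
  have hy : n1 * n2 - n1 - n2 < x - n1 * n2 := by
    have : 2 * n1 * n2 = n1 * n2 + n1 * n2 := by ring
    omega
  obtain ⟨ℓ, a, b, hab, rfl⟩ := Lp_nonempty_of_big h1 h12 hcop hy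
  have e1 : (a + n2) * n1 + b * n2 = a * n1 + b * n2 + n1 * n2 := by ring
  have e2 : a * n1 + (b + n1) * n2 = a * n1 + b * n2 + n1 * n2 := by ring
  have e3 : 2 * n1 * n2 = n1 * n2 + n1 * n2 := by ring
  have hx1 : x = (a + n2) * n1 + b * n2 := by omega
  have hx2 : x = a * n1 + (b + n1) * n2 := by omega
  have m1 : a + b + n2 ∈ Lp n1 n2 x := ⟨a + n2, b, hx1.symm, by ring⟩
  have m2 : a + b + n1 ∈ Lp n1 n2 x := ⟨a, b + n1, hx2.symm, by ring⟩
  have := mL_le m2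
  have := le_xL (by omega) h12 m1
  omega

end TwoGen
section Glue

/-- bundled context -/
structure Ctx (n1 n2 lam mu : ℕ) : Prop where
  h1 : 1 < n1
  h12 : n1 < n2
  hcop : Nat.Coprime n1 n2
  hmu : 2 * n1 * n2 - n1 - n2 < mu
  hlm : mu < lam
  hcop2 : Nat.Coprime lam mu

namespace Ctx

variable {n1 n2 lam mu : ℕ}

lemma h2 (C : Ctx n1 n2 lam mu) : 1 < n2 := lt_trans C.h1 C.h12
lemma hn1 (C : Ctx n1 n2 lam mu) : 1 ≤ n1 := le_of_lt C.h1
lemma frob_lt (C : Ctx n1 n2 lam mu) : n1 * n2 - n1 - n2 < 2 * n1 * n2 - n1 - n2 := by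
  have h1 := C.h1; have h2 := C.h2
  have e1 : n1 + n2 ≤ n1 * n2 := by nlinarith
  have e2 : 2 * n1 * n2 = n1 * n2 + n1 * n2 := by ring
  omega
lemma mu_big (C : Ctx n1 n2 lam mu) : n1 * n2 ≤ mu := by
  have h1 := C.h1; have h2 := C.h2; have hmu := C.hmu
  have e1 : n1 + n2 ≤ n1 * n2 := by nlinarith
  have e2 : 2 * n1 * n2 = n1 * n2 + n1 * n2 := by ring
  omega
lemma mupos (C : Ctx n1 n2 lam mu) : 0 < mu := by
  have h1 := C.h1; have h2 := C.h2; have := C.mu_big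
  nlinarith
lemma lampos (C : Ctx n1 n2 lam mu) : 0 < lam := lt_trans C.mupos C.hlm
lemma ne_of_big (C : Ctx n1 n2 lam mu) {x : ℕ} (hx : n1 * n2 - n1 - n2 < x) :
    (Lp n1 n2 x).Nonempty :=
  Lp_nonempty_of_big C.h1 C.h12 C.hcop hx
lemma ne_of_Fbig (C : Ctx n1 n2 lam mu) {x : ℕ} (hx : 2 * n1 * n2 - n1 - n2 < x) :
    (Lp n1 n2 x).Nonempty :=
  C.ne_of_big (lt_trans C.frob_lt hx)
lemma mune (C : Ctx n1 n2 lam mu) : (Lp n1 n2 mu).Nonempty := C.ne_of_Fbig C.hmu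
lemma lamne (C : Ctx n1 n2 lam mu) : (Lp n1 n2 lam).Nonempty :=
  C.ne_of_Fbig (lt_trans C.hmu C.hlm)
lemma two_of_Fbig (C : Ctx n1 n2 lam mu) {x : ℕ} (hx : 2 * n1 * n2 - n1 - n2 < x) :
    mL n1 n2 x < xL n1 n2 x := mL_lt_xL_of_big C.h1 C.h12 C.hcop hx

end Ctx

variable {n1 n2 lam mu : ℕ}

/-- all length sets of the gluing -/
def UU (n1 n2 lam mu m : ℕ) : Set ℕ :=
  {ℓ | ∃ s t ℓ1 ℓ2, mu * s + lam * t = m ∧ ℓ1 ∈ Lp n1 n2 s ∧ ℓ2 ∈ Lp n1 n2 t ∧ ℓ = ℓ1 + ℓ2}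

lemma lengthSet_eq_UU (m : ℕ) :
    lengthSet ![mu * n1, mu * n2, lam * n1, lam * n2] m = UU n1 n2 lam mu m := by
  ext ℓ
  constructor
  · rintro ⟨z, hz, rfl⟩
    simp only [facs, Set.mem_setOf_eq, Fin.sum_univ_four] at hz
    simp only [Matrix.cons_val_zero, Matrix.cons_val_one, Matrix.head_cons,
      Matrix.cons_val_two, Matrix.tail_cons, Matrix.cons_val_three] at hz
    refine ⟨z 0 * n1 + z 1 * n2, z 2 * n1 + z 3 * n2, z 0 + z 1, z 2 + z 3, ?_,
      ⟨z 0, z 1, rfl, rfl⟩, ⟨z 2, z 3, rfl, rfl⟩, ?_⟩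
    · rw [← hz]; ring
    · simp [Fin.sum_univ_four]; omega
  · rintro ⟨s, t, ℓ1, ℓ2, hm, ⟨a, b, hab, rfl⟩, ⟨c, d, hcd, rfl⟩, rfl⟩
    refine ⟨![a, b, c, d], ?_, ?_⟩
    · simp only [facs, Set.mem_setOf_eq, Fin.sum_univ_four]
      simp only [Matrix.cons_val_zero, Matrix.cons_val_one, Matrix.head_cons,
        Matrix.cons_val_two, Matrix.tail_cons, Matrix.cons_val_three]
      rw [← hm, ← hab, ← hcd]; ring
    · simp [Fin.sum_univ_four]; omega

lemma UU_subset_Iic (C : Ctx n1 n2 lam mu) (m : ℕ) : UU n1 n2 lam mu m ⊆ Set.Iic m := by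
  rintro ℓ ⟨s, t, ℓ1, ℓ2, hm, h1, h2, rfl⟩
  have b1 := (Lp_bounds C.h12 h1).1
  have b2 := (Lp_bounds C.h12 h2).1
  have e1 : ℓ1 ≤ s := le_trans (by nlinarith [C.h1] : ℓ1 ≤ n1 * ℓ1) b1
  have e2 : ℓ2 ≤ t := le_trans (by nlinarith [C.h1] : ℓ2 ≤ n1 * ℓ2) b2
  have hs : s ≤ mu * s := Nat.le_mul_of_pos_left s C.mupos
  have ht : t ≤ lam * t := Nat.le_mul_of_pos_left t C.lampos
  simp only [Set.mem_Iic]; omega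

lemma UU_finite (C : Ctx n1 n2 lam mu) (m : ℕ) : (UU n1 n2 lam mu m).Finite :=
  Set.Finite.subset (Set.finite_Iic m) (UU_subset_Iic C m)

/-- two blocks of the same element are related -/
lemma block_rel (C : Ctx n1 n2 lam mu) {s t s' t' : ℕ}
    (h : mu * s + lam * t = mu * s' + lam * t') (hle : t ≤ t') :
    ∃ k, t' = t + k * mu ∧ s = s' + k * lam := by
  have hlt : lam * t ≤ lam * t' := by gcongr
  have hss : s' ≤ s := by
    by_contra hc
    push_neg at hc
    have : mu * s < mu * s' := by gcongr; exact C.mupos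
    omega
  have e1 : mu * (s - s') = mu * s - mu * s' := by rw [Nat.mul_sub]
  have e2 : lam * (t' - t) = lam * t' - lam * t := by rw [Nat.mul_sub]
  have key : mu * (s - s') = lam * (t' - t) := by omega
  have hdvd : mu ∣ lam * (t' - t) := ⟨s - s', key.symm⟩
  have hdvd2 : mu ∣ (t' - t) := (Nat.Coprime.dvd_of_dvd_mul_left
    (Nat.Coprime.symm C.hcop2) hdvd)
  obtain ⟨k, hk⟩ := hdvd2
  have hc1 : mu * k = k * mu := by ring
  refine ⟨k, by omega, ?_⟩
  have e3 : mu * (s - s') = mu * (k * lam) := by rw [key, hk]; ring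
  have e4 := Nat.eq_of_mul_eq_mul_left C.mupos e3
  omega

/-- cancel: same t ⇒ same s -/
lemma block_cancel (C : Ctx n1 n2 lam mu) {s s' t m : ℕ}
    (h : mu * s + lam * t = m) (h' : mu * s' + lam * t = m) : s = s' := by
  have : mu * s = mu * s' := by omega
  exact Nat.eq_of_mul_eq_mul_left C.mupos this

/-- pick an element of a block given target sum -/
lemma block_pick (C : Ctx n1 n2 lam mu) {σ τ w : ℕ}
    (hσ : (Lp n1 n2 σ).Nonempty) (hτ : (Lp n1 n2 τ).Nonempty)
    (h1 : mL n1 n2 σ + mL n1 n2 τ ≤ w) (h2 : w ≤ xL n1 n2 σ + xL n1 n2 τ)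
    (hdvd : (n2 - n1) ∣ w - (mL n1 n2 σ + mL n1 n2 τ)) :
    ∃ ℓ1 ∈ Lp n1 n2 σ, ∃ ℓ2 ∈ Lp n1 n2 τ, w = ℓ1 + ℓ2 := by
  have hn1 := C.hn1
  have h12 := C.h12
  have hmxσ := mL_le_xL hn1 h12 hσ
  have hmxτ := mL_le_xL hn1 h12 hτ
  rcases le_or_gt w (mL n1 n2 σ + xL n1 n2 τ) with hc | hc
  · refine ⟨mL n1 n2 σ, mL_mem hσ, w - mL n1 n2 σ, ?_, by omega⟩
    apply Lp_full hn1 h12 C.hcop hτ (by omega) (by omega)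
    have e : w - mL n1 n2 σ - mL n1 n2 τ = w - (mL n1 n2 σ + mL n1 n2 τ) := by omega
    rw [e]; exact hdvd
  · refine ⟨w - xL n1 n2 τ, ?_, xL n1 n2 τ, xL_mem hn1 h12 hτ, by omega⟩
    apply Lp_full hn1 h12 C.hcop hσ (by omega) (by omega)
    have hd2 : (n2 - n1) ∣ xL n1 n2 τ - mL n1 n2 τ := dvd_xL_sub_mL hn1 h12 C.hcop hτ
    have e : w - xL n1 n2 τ - mL n1 n2 σ =
        (w - (mL n1 n2 σ + mL n1 n2 τ)) - (xL n1 n2 τ - mL n1 n2 τ) := by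
      omega
    rw [e]
    exact Nat.dvd_sub hdvd hd2

/-- window: pick AP point just below b -/
lemma window {m0 M0 b d : ℕ} (hd : 0 < d) (hlow : m0 < b) (hup : b + 1 ≤ M0 + d)
    (hdvd : d ∣ M0 - m0) (hmM : m0 ≤ M0) :
    ∃ w, m0 ≤ w ∧ w ≤ M0 ∧ d ∣ w - m0 ∧ b ≤ w + d ∧ w < b := by
  obtain ⟨q, r, hr, hqr⟩ : ∃ q r, r < d ∧ b - 1 - m0 = d * q + r :=
    ⟨(b - 1 - m0) / d, (b - 1 - m0) % d, Nat.mod_lt _ hd, (Nat.div_add_mod _ _).symm⟩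
  refine ⟨m0 + d * q, by omega, ?_, ⟨q, by omega⟩, by omega, by omega⟩
  by_contra hc
  push_neg at hc
  obtain ⟨u, hu⟩ := hdvd
  have h1 : m0 + d * u = M0 := by omega
  have h2 : u < q := by
    by_contra h3; push_neg at h3
    have : d * q ≤ d * u := by gcongr
    omega
  have h4 : d * (u + 1) ≤ d * q := by gcongr; omega
  have e : d * (u + 1) = d * u + d := by ring
  omega

end Glue
section Numeric

variable {n1 n2 lam mu : ℕ}

/-- tasty: the big gap is more than `d0` -/
lemma Dgt (C : Ctx n1 n2 lam mu) (ht : n2 * mu + n1 * n2 * (n2 - n1) < n1 * lam) :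
    xL n1 n2 mu + (n2 - n1) < mL n1 n2 lam := by
  have F1 : lam ≤ n2 * mL n1 n2 lam := mL_bounds C.h12 C.lamne
  have F2 : n1 * xL n1 n2 mu ≤ mu := xL_bounds C.hn1 C.h12 C.mune
  by_contra h
  push_neg at h
  have c1 : n1 * lam ≤ n1 * (n2 * mL n1 n2 lam) := by gcongr
  have c2 : n1 * (n2 * mL n1 n2 lam) = n1 * n2 * mL n1 n2 lam := by ring
  have c3 : n1 * n2 * mL n1 n2 lam ≤ n1 * n2 * (xL n1 n2 mu + (n2 - n1)) := by gcongr
  have c4 : n1 * n2 * (xL n1 n2 mu + (n2 - n1)) =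
      n2 * (n1 * xL n1 n2 mu) + n1 * n2 * (n2 - n1) := by ring
  have c5 : n2 * (n1 * xL n1 n2 mu) ≤ n2 * mu := by gcongr
  omega

/-- bland numeric 1 -/
lemma bl1 (C : Ctx n1 n2 lam mu) (hb : n1 * lam + n1 * n2 * (n2 - n1) < n2 * mu) :
    mL n1 n2 lam < xL n1 n2 mu + (n2 - n1) := by
  have A : n2 * mL n1 n2 lam < lam + n2 * (n2 - n1) := mL_upper C.h12 C.lamne
  have B : mu < n1 * xL n1 n2 mu + n1 * (n2 - n1) := xL_lower C.hn1 C.h12 C.mune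
  by_contra h
  push_neg at h
  have c1 : n1 * n2 * (xL n1 n2 mu + (n2 - n1)) ≤ n1 * n2 * mL n1 n2 lam := by gcongr
  have c1' : n1 * n2 * (xL n1 n2 mu + (n2 - n1)) =
      n2 * (n1 * xL n1 n2 mu) + n2 * (n1 * (n2 - n1)) := by ring
  have c2 : n1 * (n2 * mL n1 n2 lam) ≤ n1 * (lam + n2 * (n2 - n1)) - n1 := by
    have : n2 * mL n1 n2 lam + 1 ≤ lam + n2 * (n2 - n1) := A
    have := Nat.mul_le_mul_left n1 this
    have e : n1 * (n2 * mL n1 n2 lam + 1) = n1 * (n2 * mL n1 n2 lam) + n1 := by ring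
    omega
  have c2' : n1 * (n2 * mL n1 n2 lam) = n1 * n2 * mL n1 n2 lam := by ring
  have c2'' : n1 * (lam + n2 * (n2 - n1)) = n1 * lam + n1 * n2 * (n2 - n1) := by ring
  have c3 : n2 * (mu + 1) ≤ n2 * (n1 * xL n1 n2 mu + n1 * (n2 - n1)) :=
    Nat.mul_le_mul_left n2 B
  have c3' : n2 * (mu + 1) = n2 * mu + n2 := by ring
  have c3'' : n2 * (n1 * xL n1 n2 mu + n1 * (n2 - n1)) =
      n2 * (n1 * xL n1 n2 mu) + n2 * (n1 * (n2 - n1)) := by ring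
  omega

/-- always: `mL mu < xL lam + d0` -/
lemma bl2 (C : Ctx n1 n2 lam mu) : mL n1 n2 mu < xL n1 n2 lam + (n2 - n1) := by
  have A : n2 * mL n1 n2 mu < mu + n2 * (n2 - n1) := mL_upper C.h12 C.mune
  have B : lam < n1 * xL n1 n2 lam + n1 * (n2 - n1) := xL_lower C.hn1 C.h12 C.lamne
  have hmb := C.mu_big
  have hlm := C.hlm
  have h12 := C.h12
  by_contra h
  push_neg at h
  have c1 : n1 * n2 * (xL n1 n2 lam + (n2 - n1)) ≤ n1 * n2 * mL n1 n2 mu := by gcongr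
  have c1' : n1 * n2 * (xL n1 n2 lam + (n2 - n1)) =
      n2 * (n1 * xL n1 n2 lam) + n2 * (n1 * (n2 - n1)) := by ring
  have c2 : n1 * (n2 * mL n1 n2 mu) + n1 ≤ n1 * mu + n1 * (n2 * (n2 - n1)) := by
    have : n2 * mL n1 n2 mu + 1 ≤ mu + n2 * (n2 - n1) := A
    have := Nat.mul_le_mul_left n1 this
    have e : n1 * (n2 * mL n1 n2 mu + 1) = n1 * (n2 * mL n1 n2 mu) + n1 := by ring
    have e2 : n1 * (mu + n2 * (n2 - n1)) = n1 * mu + n1 * (n2 * (n2 - n1)) := by ring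
    omega
  have c2' : n1 * (n2 * mL n1 n2 mu) = n1 * n2 * mL n1 n2 mu := by ring
  have c3 : n2 * (lam + 1) ≤ n2 * (n1 * xL n1 n2 lam + n1 * (n2 - n1)) :=
    Nat.mul_le_mul_left n2 B
  have c3' : n2 * (lam + 1) = n2 * lam + n2 := by ring
  have c3'' : n2 * (n1 * xL n1 n2 lam + n1 * (n2 - n1)) =
      n2 * (n1 * xL n1 n2 lam) + n2 * (n1 * (n2 - n1)) := by ring
  -- n2*mu = n1*mu + (n2-n1)*mu  and  (n2-n1)*mu ≥ (n2-n1)*(n1*n2)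
  have d1 : (n1 + (n2 - n1)) * mu = n1 * mu + (n2 - n1) * mu := by ring
  have d0eq : n1 + (n2 - n1) = n2 := by omega
  rw [d0eq] at d1
  have d2 : (n2 - n1) * (n1 * n2) ≤ (n2 - n1) * mu := by gcongr
  have d2' : (n2 - n1) * (n1 * n2) = n1 * (n2 * (n2 - n1)) := by ring
  have d3 : n2 * mu ≤ n2 * lam := by gcongr
  have e4 : n1 * (n2 * (n2 - n1)) = n2 * (n1 * (n2 - n1)) := by ring
  omega

/-- tasty: step bound `lam ≥ mu + 2 n2 d0 + 1` -/
lemma step_bound (C : Ctx n1 n2 lam mu) (ht : n2 * mu + n1 * n2 * (n2 - n1) < n1 * lam) :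
    mu + 2 * n2 * (n2 - n1) + 1 ≤ lam := by
  have hmb := C.mu_big
  have h12 := C.h12
  by_contra h
  push_neg at h
  have c1 : n1 * lam ≤ n1 * (mu + 2 * n2 * (n2 - n1)) := by
    have : lam ≤ mu + 2 * n2 * (n2 - n1) := by omega
    gcongr
  have c1' : n1 * (mu + 2 * n2 * (n2 - n1)) =
      n1 * mu + n1 * n2 * (n2 - n1) + n1 * n2 * (n2 - n1) := by ring
  have d1 : (n1 + (n2 - n1)) * mu = n1 * mu + (n2 - n1) * mu := by ring
  have d0eq : n1 + (n2 - n1) = n2 := by omega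
  rw [d0eq] at d1
  have d2 : (n2 - n1) * (n1 * n2) ≤ (n2 - n1) * mu := by gcongr
  have d2' : (n2 - n1) * (n1 * n2) = n1 * n2 * (n2 - n1) := by ring
  omega

/-- the fundamental gap chain (up direction):
blocks `(σ+lam, τ)` above `(σ, τ+mu)` -/
lemma gamma_chain (C : Ctx n1 n2 lam mu) {σ τ : ℕ}
    (hσ : (Lp n1 n2 σ).Nonempty) (hτ : (Lp n1 n2 τ).Nonempty) :
    mL n1 n2 (σ + lam) + mL n1 n2 τ + xL n1 n2 mu ≤
      xL n1 n2 σ + xL n1 n2 (τ + mu) + mL n1 n2 lam := by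
  have i1 : mL n1 n2 (σ + lam) ≤ mL n1 n2 σ + mL n1 n2 lam := mL_add hσ C.lamne
  have i2 : mL n1 n2 σ ≤ xL n1 n2 σ := mL_le_xL C.hn1 C.h12 hσ
  have i3 : mL n1 n2 τ ≤ xL n1 n2 τ := mL_le_xL C.hn1 C.h12 hτ
  have i4 : xL n1 n2 τ + xL n1 n2 mu ≤ xL n1 n2 (τ + mu) := xL_add C.hn1 C.h12 hτ C.mune
  omega

/-- gap chain (down direction) -/
lemma gamma_chain2 (C : Ctx n1 n2 lam mu) {σ τ : ℕ}
    (hσ : (Lp n1 n2 σ).Nonempty) (hτ : (Lp n1 n2 τ).Nonempty) :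
    mL n1 n2 σ + mL n1 n2 (τ + mu) + xL n1 n2 lam ≤
      xL n1 n2 (σ + lam) + xL n1 n2 τ + mL n1 n2 mu := by
  have i1 : mL n1 n2 (τ + mu) ≤ mL n1 n2 τ + mL n1 n2 mu := mL_add hτ C.mune
  have i2 : mL n1 n2 τ ≤ xL n1 n2 τ := mL_le_xL C.hn1 C.h12 hτ
  have i3 : mL n1 n2 σ ≤ xL n1 n2 σ := mL_le_xL C.hn1 C.h12 hσ
  have i4 : xL n1 n2 σ + xL n1 n2 lam ≤ xL n1 n2 (σ + lam) := xL_add C.hn1 C.h12 hσ C.lamne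
  omega

/-- tasty single-step monotonicity -/
lemma M1_step (C : Ctx n1 n2 lam mu) (ht : n2 * mu + n1 * n2 * (n2 - n1) < n1 * lam)
    {σ τ : ℕ} (hσ : (Lp n1 n2 σ).Nonempty) (hτ : (Lp n1 n2 τ).Nonempty)
    (hτ' : (Lp n1 n2 (τ + mu)).Nonempty) (hσ' : (Lp n1 n2 (σ + lam)).Nonempty) :
    mL n1 n2 σ + mL n1 n2 (τ + mu) < mL n1 n2 (σ + lam) + mL n1 n2 τ := by
  have hsb := step_bound C ht
  have A1 : n2 * mL n1 n2 σ < σ + n2 * (n2 - n1) := mL_upper C.h12 hσ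
  have A2 : n2 * mL n1 n2 (τ + mu) < (τ + mu) + n2 * (n2 - n1) := mL_upper C.h12 hτ'
  have B1 : σ + lam ≤ n2 * mL n1 n2 (σ + lam) := mL_bounds C.h12 hσ'
  have B2 : τ ≤ n2 * mL n1 n2 τ := mL_bounds C.h12 hτ
  have key : n2 * (mL n1 n2 σ + mL n1 n2 (τ + mu)) <
      n2 * (mL n1 n2 (σ + lam) + mL n1 n2 τ) := by
    have e1 : n2 * (mL n1 n2 σ + mL n1 n2 (τ + mu)) =
        n2 * mL n1 n2 σ + n2 * mL n1 n2 (τ + mu) := by ring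
    have e2 : n2 * (mL n1 n2 (σ + lam) + mL n1 n2 τ) =
        n2 * mL n1 n2 (σ + lam) + n2 * mL n1 n2 τ := by ring
    have e3 : 2 * n2 * (n2 - n1) = n2 * (n2 - n1) + n2 * (n2 - n1) := by ring
    omega
  exact Nat.lt_of_mul_lt_mul_left key

/-- tasty iterated monotonicity -/
lemma M1_iter (C : Ctx n1 n2 lam mu) (ht : n2 * mu + n1 * n2 * (n2 - n1) < n1 * lam) :
    ∀ k, 1 ≤ k → ∀ σ t0, (Lp n1 n2 σ).Nonempty → (Lp n1 n2 t0).Nonempty →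
      (Lp n1 n2 (σ + k * lam)).Nonempty →
      mL n1 n2 σ + mL n1 n2 (t0 + k * mu) < mL n1 n2 (σ + k * lam) + mL n1 n2 t0 := by
  intro k
  induction k with
  | zero => omega
  | succ k ih =>
    intro _ σ t0 hσ ht0 hs0
    rcases Nat.eq_zero_or_pos k with hk0 | hk1
    · subst hk0
      have e : σ + 1 * lam = σ + lam := by ring
      have e2 : t0 + 1 * mu = t0 + mu := by ring
      rw [e, e2]
      rw [e] at hs0
      exact M1_step C ht hσ ht0 (C.ne_of_Fbig (by have := C.hmu; omega)) hs0
    · -- step: first go from (σ, t0 + (k+1)μ) up to (σ+λ, t0 + kμ), then IH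
      have hlF := lt_trans C.hmu C.hlm
      have hσlam : (Lp n1 n2 (σ + lam)).Nonempty := C.ne_of_Fbig (by omega)
      have step1 : mL n1 n2 σ + mL n1 n2 ((t0 + k * mu) + mu) <
          mL n1 n2 (σ + lam) + mL n1 n2 (t0 + k * mu) := by
        apply M1_step C ht hσ
        · exact C.ne_of_Fbig (by have := C.hmu; nlinarith)
        · exact C.ne_of_Fbig (by have := C.hmu; nlinarith)
        · exact hσlam
      have step2 : mL n1 n2 (σ + lam) + mL n1 n2 (t0 + k * mu) <
          mL n1 n2 ((σ + lam) + k * lam) + mL n1 n2 t0 := by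
        apply ih hk1 (σ + lam) t0 hσlam ht0
        have e : σ + lam + k * lam = σ + (k + 1) * lam := by ring
        rw [e]; exact hs0
      have e1 : t0 + k * mu + mu = t0 + (k + 1) * mu := by ring
      have e2 : σ + lam + k * lam = σ + (k + 1) * lam := by ring
      rw [e1] at step1
      rw [e2] at step2
      omega

end Numeric
section Walks

variable {n1 n2 lam mu : ℕ}

lemma step_down (C : Ctx n1 n2 lam mu) {m b : ℕ} (hb : b ∈ UU n1 n2 lam mu m) :
    (∃ a ∈ UU n1 n2 lam mu m, a < b ∧ b ≤ a + (n2 - n1)) ∨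
    (∃ s t, mu * s + lam * t = m ∧ (Lp n1 n2 s).Nonempty ∧ (Lp n1 n2 t).Nonempty ∧
      b = mL n1 n2 s + mL n1 n2 t) := by
  have h12 := C.h12
  have hn1 := C.hn1
  obtain ⟨s, t, ℓ1, ℓ2, hm, h1m, h2m, rfl⟩ := hb
  have hs : (Lp n1 n2 s).Nonempty := ⟨ℓ1, h1m⟩
  have htne : (Lp n1 n2 t).Nonempty := ⟨ℓ2, h2m⟩
  rcases lt_or_ge (mL n1 n2 s) ℓ1 with hc1 | hc1
  · left
    have hdv : (n2 - n1) ∣ ℓ1 - mL n1 n2 s := Lp_dvd_sub h12 C.hcop h1m (mL_mem hs) (mL_le h1m)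
    have hge : mL n1 n2 s + (n2 - n1) ≤ ℓ1 := by
      obtain ⟨k, hk⟩ := hdv
      rcases k with _ | k''
      · simp only [Nat.mul_zero] at hk; omega
      · have e : (n2 - n1) * (k'' + 1) = (n2 - n1) * k'' + (n2 - n1) := by ring
        omega
    have hmem : ℓ1 - (n2 - n1) ∈ Lp n1 n2 s := by
      apply Lp_full hn1 h12 C.hcop hs (by omega) (le_trans (by omega) (le_xL hn1 h12 h1m))
      have e : ℓ1 - (n2 - n1) - mL n1 n2 s = (ℓ1 - mL n1 n2 s) - (n2 - n1) := by omega
      rw [e]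
      exact Nat.dvd_sub hdv dvd_rfl
    refine ⟨ℓ1 - (n2 - n1) + ℓ2, ⟨s, t, _, _, hm, hmem, h2m, rfl⟩, by omega, by omega⟩
  · rcases lt_or_ge (mL n1 n2 t) ℓ2 with hc2 | hc2
    · left
      have hdv : (n2 - n1) ∣ ℓ2 - mL n1 n2 t :=
        Lp_dvd_sub h12 C.hcop h2m (mL_mem htne) (mL_le h2m)
      have hge : mL n1 n2 t + (n2 - n1) ≤ ℓ2 := by
        obtain ⟨k, hk⟩ := hdv
        rcases k with _ | k''
        · simp only [Nat.mul_zero] at hk; omega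
        · have e : (n2 - n1) * (k'' + 1) = (n2 - n1) * k'' + (n2 - n1) := by ring
          omega
      have hmem : ℓ2 - (n2 - n1) ∈ Lp n1 n2 t := by
        apply Lp_full hn1 h12 C.hcop htne (by omega) (le_trans (by omega) (le_xL hn1 h12 h2m))
        have e : ℓ2 - (n2 - n1) - mL n1 n2 t = (ℓ2 - mL n1 n2 t) - (n2 - n1) := by omega
        rw [e]
        exact Nat.dvd_sub hdv dvd_rfl
      refine ⟨ℓ1 + (ℓ2 - (n2 - n1)), ⟨s, t, _, _, hm, h1m, hmem, rfl⟩, by omega, by omega⟩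
    · right
      have e1 : ℓ1 = mL n1 n2 s := le_antisymm (by omega) (mL_le h1m)
      have e2 : ℓ2 = mL n1 n2 t := le_antisymm (by omega) (mL_le h2m)
      exact ⟨s, t, hm, hs, htne, by omega⟩

/-- from a lower block with a window hypothesis, extract an element within d0 below b -/
lemma window_into (C : Ctx n1 n2 lam mu) {σ τ b m : ℕ}
    (hblock : mu * σ + lam * τ = m)
    (hσ : (Lp n1 n2 σ).Nonempty) (hτ : (Lp n1 n2 τ).Nonempty)
    (hlow : mL n1 n2 σ + mL n1 n2 τ < b)
    (hup : b + 1 ≤ xL n1 n2 σ + xL n1 n2 τ + (n2 - n1)) :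
    ∃ a ∈ UU n1 n2 lam mu m, a < b ∧ b ≤ a + (n2 - n1) := by
  have h12 := C.h12
  have hn1 := C.hn1
  have hd0 : 0 < n2 - n1 := by omega
  have i1 := mL_le_xL hn1 h12 hσ
  have i2 := mL_le_xL hn1 h12 hτ
  have hdvd : (n2 - n1) ∣ (xL n1 n2 σ + xL n1 n2 τ) - (mL n1 n2 σ + mL n1 n2 τ) := by
    have e : (xL n1 n2 σ + xL n1 n2 τ) - (mL n1 n2 σ + mL n1 n2 τ) =
        (xL n1 n2 σ - mL n1 n2 σ) + (xL n1 n2 τ - mL n1 n2 τ) := by omega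
    rw [e]
    exact Nat.dvd_add (dvd_xL_sub_mL hn1 h12 C.hcop hσ) (dvd_xL_sub_mL hn1 h12 C.hcop hτ)
  obtain ⟨w, hw1, hw2, hw3, hw4, hw5⟩ := window hd0 hlow hup hdvd (by omega)
  obtain ⟨ℓ1', hℓ1', ℓ2', hℓ2', rfl⟩ := block_pick C hσ hτ hw1 hw2 hw3
  exact ⟨ℓ1' + ℓ2', ⟨σ, τ, _, _, hblock, hℓ1', hℓ2', rfl⟩, hw5, hw4⟩

/-- bland walk, t increasing -/
lemma bland_walk_up (C : Ctx n1 n2 lam mu)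
    (hbl : n1 * lam + n1 * n2 * (n2 - n1) < n2 * mu) :
    ∀ k, 1 ≤ k → ∀ σ τ σ₀ b m, mu * σ + lam * τ = m →
      (Lp n1 n2 σ).Nonempty → (Lp n1 n2 τ).Nonempty → (Lp n1 n2 σ₀).Nonempty →
      σ = σ₀ + k * lam → b ≤ mL n1 n2 σ + mL n1 n2 τ →
      mL n1 n2 σ₀ + mL n1 n2 (τ + k * mu) < b →
      ∃ a ∈ UU n1 n2 lam mu m, a < b ∧ b ≤ a + (n2 - n1) := by
  have hbl1 := bl1 C hbl
  have hlamF := lt_trans C.hmu C.hlm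
  intro k
  induction k with
  | zero => omega
  | succ k' ih =>
    intro _ σ τ σ₀ b m hblock hσ hτ hσ₀ hσeq hb1 hb2
    have hσ'ne : (Lp n1 n2 (σ₀ + k' * lam)).Nonempty := by
      rcases Nat.eq_zero_or_pos k' with h0 | h0
      · subst h0; simpa using hσ₀
      · apply C.ne_of_Fbig
        have : lam * 1 ≤ lam * k' := Nat.mul_le_mul le_rfl h0
        have e : lam * k' = k' * lam := by ring
        omega
    have hτ'ne : (Lp n1 n2 (τ + mu)).Nonempty := C.ne_of_Fbig (by have := C.hmu; omega)
    have hblock' : mu * (σ₀ + k' * lam) + lam * (τ + mu) = m := by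
      have e : mu * (σ₀ + k' * lam) + lam * (τ + mu) = mu * (σ₀ + (k' + 1) * lam) + lam * τ := by
        ring
      rw [e, ← hσeq]; exact hblock
    rcases lt_or_ge (mL n1 n2 (σ₀ + k' * lam) + mL n1 n2 (τ + mu)) b with hc | hc
    · -- extract from this block
      apply window_into C hblock' hσ'ne hτ'ne hc
      have hchain := gamma_chain C hσ'ne hτ
      have e : σ₀ + k' * lam + lam = σ := by rw [hσeq]; ring
      rw [e] at hchain
      omega
    · -- recurse
      rcases Nat.eq_zero_or_pos k' with h0 | h0
      · exfalso
        subst h0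
        simp only [Nat.zero_mul, Nat.add_zero, Nat.one_mul] at hσeq hb2 hc
        have e : τ + 1 * mu = τ + mu := by ring
        rw [e] at hb2
        omega
      · apply ih h0 (σ₀ + k' * lam) (τ + mu) σ₀ b m hblock' hσ'ne hτ'ne hσ₀ rfl hc
        have e : τ + mu + k' * mu = τ + (k' + 1) * mu := by ring
        rw [e]
        exact hb2

/-- bland walk, t decreasing (no bland hypothesis needed) -/
lemma bland_walk_down (C : Ctx n1 n2 lam mu) :
    ∀ k, 1 ≤ k → ∀ σ τ τ₀ b m, mu * σ + lam * τ = m →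
      (Lp n1 n2 σ).Nonempty → (Lp n1 n2 τ).Nonempty → (Lp n1 n2 τ₀).Nonempty →
      τ = τ₀ + k * mu → b ≤ mL n1 n2 σ + mL n1 n2 τ →
      mL n1 n2 (σ + k * lam) + mL n1 n2 τ₀ < b →
      ∃ a ∈ UU n1 n2 lam mu m, a < b ∧ b ≤ a + (n2 - n1) := by
  have hbl2 := bl2 C
  have hlamF := lt_trans C.hmu C.hlm
  intro k
  induction k with
  | zero => omega
  | succ k' ih =>
    intro _ σ τ τ₀ b m hblock hσ hτ hτ₀ hτeq hb1 hb2
    have hτ'ne : (Lp n1 n2 (τ₀ + k' * mu)).Nonempty := by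
      rcases Nat.eq_zero_or_pos k' with h0 | h0
      · subst h0; simpa using hτ₀
      · apply C.ne_of_Fbig
        have : mu * 1 ≤ mu * k' := Nat.mul_le_mul le_rfl h0
        have e : mu * k' = k' * mu := by ring
        have := C.hmu
        omega
    have hσ'ne : (Lp n1 n2 (σ + lam)).Nonempty := C.ne_of_Fbig (by omega)
    have hblock' : mu * (σ + lam) + lam * (τ₀ + k' * mu) = m := by
      have e : mu * (σ + lam) + lam * (τ₀ + k' * mu) = mu * σ + lam * (τ₀ + (k' + 1) * mu) := by
        ring
      rw [e, ← hτeq]; exact hblock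
    rcases lt_or_ge (mL n1 n2 (σ + lam) + mL n1 n2 (τ₀ + k' * mu)) b with hc | hc
    · apply window_into C hblock' hσ'ne hτ'ne hc
      have hchain := gamma_chain2 C hσ hτ'ne
      have e : τ₀ + k' * mu + mu = τ := by rw [hτeq]; ring
      rw [e] at hchain
      omega
    · rcases Nat.eq_zero_or_pos k' with h0 | h0
      · exfalso
        subst h0
        simp only [Nat.zero_mul, Nat.add_zero, Nat.one_mul] at hτeq hb2 hc
        have e : σ + 1 * lam = σ + lam := by ring
        rw [e] at hb2
        omega
      · apply ih h0 (σ + lam) (τ₀ + k' * mu) τ₀ b m hblock' hσ'ne hτ'ne hτ₀ rfl hc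
        have e : σ + lam + k' * lam = σ + (k' + 1) * lam := by ring
        rw [e]
        exact hb2

/-- main bland gap lemma -/
lemma bland_main (C : Ctx n1 n2 lam mu)
    (hbl : n1 * lam + n1 * n2 * (n2 - n1) < n2 * mu) {m b : ℕ}
    (hb : b ∈ UU n1 n2 lam mu m) (hlow : ∃ a ∈ UU n1 n2 lam mu m, a < b) :
    ∃ a ∈ UU n1 n2 lam mu m, a < b ∧ b ≤ a + (n2 - n1) := by
  rcases step_down C hb with done | ⟨s, t, hm, hs, htne, hbeq⟩
  · exact done
  obtain ⟨a₀, ha₀, ha₀b⟩ := hlow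
  obtain ⟨s₀, t₀, ℓ1₀, ℓ2₀, hm₀, h1₀, h2₀, rfl⟩ := ha₀
  have hs₀ : (Lp n1 n2 s₀).Nonempty := ⟨ℓ1₀, h1₀⟩
  have ht₀ : (Lp n1 n2 t₀).Nonempty := ⟨ℓ2₀, h2₀⟩
  have hb₀ : mL n1 n2 s₀ + mL n1 n2 t₀ ≤ ℓ1₀ + ℓ2₀ := add_le_add (mL_le h1₀) (mL_le h2₀)
  have htne' : t₀ ≠ t := by
    rintro rfl
    have := block_cancel C hm₀ hm
    subst this
    omega
  rcases le_or_gt t₀ t with hle | hlt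
  · obtain ⟨k, hk1, hk2⟩ := block_rel C (hm₀.trans hm.symm) hle
    have hk : 1 ≤ k := by
      rcases Nat.eq_zero_or_pos k with h0 | h0
      · exfalso; subst h0; simp at hk1; omega
      · exact h0
    apply bland_walk_down C k hk s t t₀ b m hm hs htne ht₀ hk1 (le_of_eq hbeq)
    rw [← hk2]
    omega
  · obtain ⟨k, hk1, hk2⟩ := block_rel C (hm.trans hm₀.symm) (le_of_lt hlt)
    have hk : 1 ≤ k := by
      rcases Nat.eq_zero_or_pos k with h0 | h0
      · exfalso; subst h0; simp at hk1; omega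
      · exact h0
    apply bland_walk_up C hbl k hk s t s₀ b m hm hs htne hs₀ hk2 (le_of_eq hbeq)
    rw [← hk1]
    omega

end Walks
section TastyKey

variable {n1 n2 lam mu : ℕ}

/-- main tasty dichotomy -/
lemma tasty_key (C : Ctx n1 n2 lam mu) (ht : n2 * mu + n1 * n2 * (n2 - n1) < n1 * lam)
    {m b : ℕ} (hb : b ∈ UU n1 n2 lam mu m) (hlow : ∃ a ∈ UU n1 n2 lam mu m, a < b) :
    (∃ a ∈ UU n1 n2 lam mu m, a < b ∧ b + 1 ≤ a + (mL n1 n2 lam - xL n1 n2 mu)) ∨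
    (∃ s t, mu * s + lam * t = m ∧ b = mL n1 n2 s + mL n1 n2 t ∧
      t ≤ 2 * n1 * n2 - n1 - n2 ∧ b + (n2 - n1) ∈ UU n1 n2 lam mu m ∧
      ∃ a ∈ UU n1 n2 lam mu m, a < b ∧ b ≤ a + (mL n1 n2 lam - xL n1 n2 mu)) := by
  have h12 := C.h12
  have hn1 := C.hn1
  have hDgt := Dgt C ht
  have hlamF := lt_trans C.hmu C.hlm
  rcases step_down C hb with ⟨a, ha, hab, hbd⟩ | ⟨s, t, hm, hs, htne, hbeq⟩
  · exact Or.inl ⟨a, ha, hab, by omega⟩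
  obtain ⟨a₀, ha₀, ha₀b⟩ := hlow
  obtain ⟨s₀, t₀, ℓ1₀, ℓ2₀, hm₀, h1₀, h2₀, rfl⟩ := ha₀
  have hs₀ : (Lp n1 n2 s₀).Nonempty := ⟨ℓ1₀, h1₀⟩
  have ht₀ : (Lp n1 n2 t₀).Nonempty := ⟨ℓ2₀, h2₀⟩
  have hb₀ : mL n1 n2 s₀ + mL n1 n2 t₀ ≤ ℓ1₀ + ℓ2₀ := add_le_add (mL_le h1₀) (mL_le h2₀)
  have htt : t < t₀ := by
    rcases lt_trichotomy t t₀ with h | h | h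
    · exact h
    · exfalso
      subst h
      have := block_cancel C hm₀ hm
      subst this
      omega
    · exfalso
      obtain ⟨k, hk1, hk2⟩ := block_rel C (hm₀.trans hm.symm) (le_of_lt h)
      have hk : 1 ≤ k := by
        rcases Nat.eq_zero_or_pos k with h0 | h0
        · subst h0; simp at hk1; omega
        · exact h0
      have := M1_iter C ht k hk s t₀ hs ht₀ (by rw [← hk2]; exact hs₀)
      rw [← hk1, ← hk2] at this
      omega
  obtain ⟨k, hk1, hk2⟩ := block_rel C (hm.trans hm₀.symm) (le_of_lt htt)
  obtain ⟨k', rfl⟩ : ∃ k', k = k' + 1 := by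
    refine ⟨k - 1, ?_⟩
    rcases Nat.eq_zero_or_pos k with h0 | h0
    · subst h0; simp at hk1; omega
    · omega
  -- σ := s₀ + k' * lam is s - lam
  have hσs : s₀ + k' * lam + lam = s := by
    rw [hk2]; ring
  have hσne : (Lp n1 n2 (s₀ + k' * lam)).Nonempty := by
    rcases Nat.eq_zero_or_pos k' with h0 | h0
    · subst h0; simpa using hs₀
    · apply C.ne_of_Fbig
      have : lam * 1 ≤ lam * k' := Nat.mul_le_mul le_rfl h0
      have e : lam * k' = k' * lam := by ring
      omega
  have hτne : (Lp n1 n2 (t + mu)).Nonempty := C.ne_of_Fbig (by have := C.hmu; omega)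
  have hblock : mu * (s₀ + k' * lam) + lam * (t + mu) = m := by
    have e : mu * (s₀ + k' * lam) + lam * (t + mu) =
        mu * (s₀ + k' * lam + lam) + lam * t := by ring
    rw [e, hσs]; exact hm
  have hm'' : mL n1 n2 (s₀ + k' * lam) + mL n1 n2 (t + mu) < b := by
    have := M1_step C ht hσne htne hτne (by rw [hσs]; exact hs)
    rw [hσs] at this
    omega
  rcases le_or_gt b (xL n1 n2 (s₀ + k' * lam) + xL n1 n2 (t + mu)) with hbM | hbM
  · -- window into the lower block: element within d0
    left
    obtain ⟨a, haU, h1a, h2a⟩ := window_into C hblock hσne hτne hm'' (by omega)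
    exact ⟨a, haU, h1a, by omega⟩
  · -- M'' < b: the gap case
    have hM''mem : xL n1 n2 (s₀ + k' * lam) + xL n1 n2 (t + mu) ∈ UU n1 n2 lam mu m :=
      ⟨_, _, _, _, hblock, xL_mem hn1 h12 hσne, xL_mem hn1 h12 hτne, rfl⟩
    have hchain := gamma_chain C hσne htne
    rw [hσs] at hchain
    -- hchain : mL s + mL t + xL mu ≤ xL σ + xL (t+mu) + mL lam
    rcases le_or_gt (b + 1) (xL n1 n2 (s₀ + k' * lam) + xL n1 n2 (t + mu) +
        (mL n1 n2 lam - xL n1 n2 mu)) with hcase | hcase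
    · exact Or.inl ⟨_, hM''mem, hbM, hcase⟩
    · right
      have htF : t ≤ 2 * n1 * n2 - n1 - n2 := by
        by_contra htF
        push_neg at htF
        have h2lt : mL n1 n2 t < xL n1 n2 t := C.two_of_Fbig htF
        have i1 : mL n1 n2 s ≤ mL n1 n2 (s₀ + k' * lam) + mL n1 n2 lam := by
          rw [← hσs]; exact mL_add hσne C.lamne
        have i2 : mL n1 n2 (s₀ + k' * lam) ≤ xL n1 n2 (s₀ + k' * lam) :=
          mL_le_xL hn1 h12 hσne
        have i4 : xL n1 n2 t + xL n1 n2 mu ≤ xL n1 n2 (t + mu) := xL_add hn1 h12 htne C.mune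
        omega
      have hsF : 2 * n1 * n2 - n1 - n2 < s := by
        have : lam ≤ s := by rw [← hσs]; omega
        omega
      have hbd0 : b + (n2 - n1) ∈ UU n1 n2 lam mu m := by
        have h2s : mL n1 n2 s < xL n1 n2 s := C.two_of_Fbig hsF
        have hdv := dvd_xL_sub_mL hn1 h12 C.hcop hs
        have hge : mL n1 n2 s + (n2 - n1) ≤ xL n1 n2 s := by
          obtain ⟨k, hk⟩ := hdv
          rcases k with _ | k''
          · simp only [Nat.mul_zero] at hk; omega
          · have e : (n2 - n1) * (k'' + 1) = (n2 - n1) * k'' + (n2 - n1) := by ring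
            omega
        have hmem : mL n1 n2 s + (n2 - n1) ∈ Lp n1 n2 s :=
          Lp_full hn1 h12 C.hcop hs (by omega) hge (by simpa using Dvd.intro 1 rfl)
        exact ⟨s, t, _, _, hm, hmem, mL_mem htne, by omega⟩
      exact ⟨s, t, hm, hbeq, htF, hbd0, _, hM''mem, hbM, by omega⟩

end TastyKey
section Counting

open Finset in
/-- all gaps ≤ d gives spread bound -/
lemma count_gap (d : ℕ) : ∀ (n : ℕ) (U : Finset ℕ) (hne : U.Nonempty), U.card ≤ n →
    (∀ b ∈ U, (∃ a ∈ U, a < b) → ∃ a ∈ U, a < b ∧ b ≤ a + d) →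
    U.max' hne - U.min' hne ≤ (U.card - 1) * d := by
  intro n
  induction n with
  | zero =>
    intro U hne hcard _
    have := Finset.card_pos.mpr hne
    omega
  | succ n ih =>
    intro U hne hcard hgap
    rcases eq_or_lt_of_le (Finset.min'_le U _ (U.max'_mem hne)) with heq | hlt
    · omega
    obtain ⟨a, ha, hab, hbd⟩ := hgap (U.max' hne) (U.max'_mem hne)
      ⟨U.min' hne, U.min'_mem hne, hlt⟩
    classical
    set U' := U.filter (· ≤ a) with hU'
    have haU' : a ∈ U' := Finset.mem_filter.mpr ⟨ha, le_rfl⟩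
    have hU'ne : U'.Nonempty := ⟨a, haU'⟩
    have hsub : U' ⊆ U := Finset.filter_subset _ _
    have hbnot : U.max' hne ∉ U' := by
      intro hmem
      have := (Finset.mem_filter.mp hmem).2
      omega
    have hcard' : U'.card < U.card :=
      Finset.card_lt_card ⟨hsub, fun hss => hbnot (hss (U.max'_mem hne))⟩
    have hmax' : U'.max' hU'ne = a := by
      apply le_antisymm
      · exact Finset.max'_le _ _ _ (fun x hx => (Finset.mem_filter.mp hx).2)
      · exact Finset.le_max' _ _ haU'
    have hmin' : U'.min' hU'ne = U.min' hne := by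
      apply le_antisymm
      · apply Finset.min'_le
        apply Finset.mem_filter.mpr
        exact ⟨U.min'_mem hne, Finset.min'_le U _ ha⟩
      · exact Finset.le_min' _ _ _ (fun x hx => Finset.min'_le U _ (hsub hx))
    have hgap' : ∀ b ∈ U', (∃ x ∈ U', x < b) → ∃ x ∈ U', x < b ∧ b ≤ x + d := by
      intro b hb ⟨x, hx, hxb⟩
      obtain ⟨y, hy, hyb, hyd⟩ := hgap b (hsub hb) ⟨x, hsub hx, hxb⟩
      refine ⟨y, ?_, hyb, hyd⟩
      apply Finset.mem_filter.mpr
      refine ⟨hy, ?_⟩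
      have hba : b ≤ a := (Finset.mem_filter.mp hb).2
      omega
    have hrec := ih U' hU'ne (by omega) hgap'
    rw [hmax', hmin'] at hrec
    have hc2 : 2 ≤ U.card := Finset.one_lt_card.mpr
      ⟨a, ha, U.max' hne, U.max'_mem hne, by omega⟩
    have e1 : (U.card - 1) * d = (U.card - 2) * d + d := by
      have : U.card - 1 = (U.card - 2) + 1 := by omega
      rw [this, add_mul, one_mul]
    have e2 : (U'.card - 1) * d ≤ (U.card - 2) * d := by
      apply Nat.mul_le_mul_right
      omega
    have hmla : U.min' hne ≤ a := Finset.min'_le U _ ha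
    omega

open Finset in
/-- gaps ≤ D plus bad bookkeeping -/
lemma count_gapD (D : ℕ) [DecidableEq ℕ] :
    ∀ (n : ℕ) (U : Finset ℕ) (P : ℕ → Prop) [DecidablePred P] (hne : U.Nonempty), U.card ≤ n →
    (∀ b ∈ U, (∃ a ∈ U, a < b) → (∃ a ∈ U, a < b ∧ b + 1 ≤ a + D) ∨
      (P b ∧ ∃ a ∈ U, a < b ∧ b ≤ a + D)) →
    U.max' hne - U.min' hne ≤ (U.card - 1) * (D - 1) + (U.filter P).card := by
  intro n
  induction n with
  | zero =>
    intro U P _ hne hcard _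
    have := Finset.card_pos.mpr hne
    omega
  | succ n ih =>
    intro U P hP hne hcard hgap
    rcases eq_or_lt_of_le (Finset.min'_le U _ (U.max'_mem hne)) with heq | hlt
    · omega
    have hbig := hgap (U.max' hne) (U.max'_mem hne) ⟨U.min' hne, U.min'_mem hne, hlt⟩
    -- extract a and a gap bound, recording if P was used
    obtain ⟨a, ha, hab, hbd, hPmax⟩ :
        ∃ a ∈ U, a < U.max' hne ∧ U.max' hne ≤ a + D ∧
          (U.max' hne ≤ a + D - 1 ∨ P (U.max' hne)) := by
      rcases hbig with ⟨a, ha, h1, h2⟩ | ⟨hp, a, ha, h1, h2⟩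
      · exact ⟨a, ha, h1, by omega, Or.inl (by omega)⟩
      · exact ⟨a, ha, h1, h2, Or.inr hp⟩
    set U' := U.filter (· ≤ a) with hU'
    have haU' : a ∈ U' := Finset.mem_filter.mpr ⟨ha, le_rfl⟩
    have hU'ne : U'.Nonempty := ⟨a, haU'⟩
    have hsub : U' ⊆ U := Finset.filter_subset _ _
    have hbnot : U.max' hne ∉ U' := by
      intro hmem
      have := (Finset.mem_filter.mp hmem).2
      omega
    have hcard' : U'.card < U.card :=
      Finset.card_lt_card ⟨hsub, fun hss => hbnot (hss (U.max'_mem hne))⟩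
    have hmax' : U'.max' hU'ne = a := by
      apply le_antisymm
      · exact Finset.max'_le _ _ _ (fun x hx => (Finset.mem_filter.mp hx).2)
      · exact Finset.le_max' _ _ haU'
    have hmin' : U'.min' hU'ne = U.min' hne := by
      apply le_antisymm
      · apply Finset.min'_le
        apply Finset.mem_filter.mpr
        exact ⟨U.min'_mem hne, Finset.min'_le U _ ha⟩
      · exact Finset.le_min' _ _ _ (fun x hx => Finset.min'_le U _ (hsub hx))
    have hgap' : ∀ b ∈ U', (∃ x ∈ U', x < b) → (∃ x ∈ U', x < b ∧ b + 1 ≤ x + D) ∨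
        (P b ∧ ∃ x ∈ U', x < b ∧ b ≤ x + D) := by
      intro b hb ⟨x, hx, hxb⟩
      have hba : b ≤ a := (Finset.mem_filter.mp hb).2
      rcases hgap b (hsub hb) ⟨x, hsub hx, hxb⟩ with ⟨y, hy, h1, h2⟩ | ⟨hp, y, hy, h1, h2⟩
      · exact Or.inl ⟨y, Finset.mem_filter.mpr ⟨hy, by omega⟩, h1, h2⟩
      · exact Or.inr ⟨hp, y, Finset.mem_filter.mpr ⟨hy, by omega⟩, h1, h2⟩
    have hrec := ih U' P hU'ne (by omega) hgap'
    rw [hmax', hmin'] at hrec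
    have hc2 : 2 ≤ U.card := Finset.one_lt_card.mpr
      ⟨a, ha, U.max' hne, U.max'_mem hne, by omega⟩
    have hfsub : U'.filter P ⊆ U.filter P := Finset.filter_subset_filter _ hsub
    have hmla : U.min' hne ≤ a := Finset.min'_le U _ ha
    have e2 : (U'.card - 1) * (D - 1) ≤ (U.card - 2) * (D - 1) := by
      apply Nat.mul_le_mul_right
      omega
    have e1 : (U.card - 1) * (D - 1) = (U.card - 2) * (D - 1) + (D - 1) := by
      have : U.card - 1 = (U.card - 2) + 1 := by omega
      rw [this, add_mul, one_mul]
    rcases hPmax with hsmall | hPb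
    · -- gap at top ≤ D - 1
      have hfc : (U'.filter P).card ≤ (U.filter P).card := Finset.card_le_card hfsub
      omega
    · -- gap ≤ D but top is bad; bad count strictly decreases
      have hssP : U'.filter P ⊂ U.filter P := by
        refine ⟨hfsub, fun hss => ?_⟩
        have : U.max' hne ∈ U'.filter P :=
          hss (Finset.mem_filter.mpr ⟨U.max'_mem hne, hPb⟩)
        exact hbnot (Finset.mem_filter.mp this).1
      have hfc : (U'.filter P).card < (U.filter P).card := Finset.card_lt_card hssP
      omega

end Counting
section Special

variable {n1 n2 lam mu : ℕ}

lemma Lp_zero (h1 : 0 < n1) (h2 : 0 < n2) {ℓ : ℕ} : ℓ ∈ Lp n1 n2 0 ↔ ℓ = 0 := by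
  constructor
  · rintro ⟨a, b, hab, rfl⟩
    have : a * n1 = 0 ∧ b * n2 = 0 := by omega
    rcases this with ⟨e1, e2⟩
    have : a = 0 := by
      rcases Nat.mul_eq_zero.mp e1 with h | h
      · exact h
      · omega
    have : b = 0 := by
      rcases Nat.mul_eq_zero.mp e2 with h | h
      · exact h
      · omega
    omega
  · rintro rfl
    exact ⟨0, 0, by ring, by ring⟩

lemma Lp_n1n2 (C : Ctx n1 n2 lam mu) {ℓ : ℕ} :
    ℓ ∈ Lp n1 n2 (n1 * n2) ↔ ℓ = n1 ∨ ℓ = n2 := by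
  constructor
  · rintro ⟨a, b, hab, rfl⟩
    have hdvd : n2 ∣ a * n1 := by
      have : n2 ∣ n1 * n2 := ⟨n1, by ring⟩
      have h2 : n2 ∣ b * n2 := ⟨b, by ring⟩
      have e : a * n1 = n1 * n2 - b * n2 := by omega
      rw [e]
      exact Nat.dvd_sub this h2
    have hdvd2 : n2 ∣ a := (Nat.Coprime.dvd_of_dvd_mul_right
      (Nat.Coprime.symm C.hcop) hdvd)
    obtain ⟨k, hk⟩ := hdvd2
    rcases k with _ | k
    · left
      have ha : a = 0 := by simpa using hk
      subst ha
      simp only [Nat.zero_mul, Nat.zero_add] at hab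
      have h2 : 0 < n2 := by have := C.h2; omega
      have : b = n1 := by
        have e : b * n2 = n1 * n2 := by omega
        exact Nat.eq_of_mul_eq_mul_right h2 e
      omega
    · rcases k with _ | k
      · right
        have ha : a = n2 := by omega
        rw [ha] at hab
        have e2 : n2 * n1 = n1 * n2 := by ring
        have hb0 : b * n2 = 0 := by omega
        have hb : b = 0 := by
          rcases Nat.mul_eq_zero.mp hb0 with h | h
          · exact h
          · have := C.h2; omega
        omega
      · exfalso
        have h1 := C.h1
        have hk2 : n2 * 2 ≤ a := by
          have : n2 * 2 ≤ n2 * (k + 1 + 1) := by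
            apply Nat.mul_le_mul_left
            omega
          omega
        have c1 : n2 * 2 * n1 ≤ a * n1 := mul_le_mul_left hk2 n1
        have c2 : n2 * 2 * n1 = n1 * n2 + n1 * n2 := by ring
        have h2 := C.h2
        have h1' := C.h1
        have c3 : 1 * 1 ≤ n1 * n2 := Nat.mul_le_mul (by omega) (by omega)
        omega
  · rintro (h | h)
    · exact ⟨0, n1, by ring, by omega⟩
    · exact ⟨n2, 0, by ring, by omega⟩

/-- the Betti-style element `lam * mu` -/
lemma UU_lammu (C : Ctx n1 n2 lam mu) {ℓ : ℕ} :
    ℓ ∈ UU n1 n2 lam mu (lam * mu) ↔ ℓ ∈ Lp n1 n2 lam ∨ ℓ ∈ Lp n1 n2 mu := by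
  have h1 : 0 < n1 := by have := C.h1; omega
  have h2 : 0 < n2 := by have := C.h2; omega
  constructor
  · rintro ⟨s, t, ℓ1, ℓ2, hm, hℓ1, hℓ2, rfl⟩
    have hdvd : mu ∣ lam * t := by
      have d1 : mu ∣ mu * lam := ⟨lam, rfl⟩
      have d2 : mu ∣ mu * s := ⟨s, rfl⟩
      have e : lam * t = mu * lam - mu * s := by
        have : mu * lam = lam * mu := by ring
        omega
      rw [e]
      exact Nat.dvd_sub d1 d2
    have hdvd2 : mu ∣ t := (Nat.Coprime.dvd_of_dvd_mul_left
      (Nat.Coprime.symm C.hcop2) hdvd)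
    obtain ⟨k, hk⟩ := hdvd2
    have hmupos := C.mupos
    rcases k with _ | k
    · -- t = 0, s = lam
      left
      have ht0 : t = 0 := by omega
      subst ht0
      have : s = lam := by
        have e : mu * s = mu * lam := by
          have : lam * mu = mu * lam := by ring
          omega
        exact Nat.eq_of_mul_eq_mul_left hmupos e
      subst this
      have : ℓ2 = 0 := (Lp_zero h1 h2).mp hℓ2
      subst this
      simpa using hℓ1
    · rcases k with _ | k
      · -- t = mu, s = 0
        right
        have ht : t = mu := by omega
        rw [ht] at hm hℓ2
        have hs0 : s = 0 := by
          have e : mu * s = 0 := by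
            have e1 : lam * mu = mu * lam := by ring
            omega
          rcases Nat.mul_eq_zero.mp e with h | h
          · omega
          · exact h
        subst hs0
        have : ℓ1 = 0 := (Lp_zero h1 h2).mp hℓ1
        subst this
        simpa using hℓ2
      · exfalso
        have hmul : lam * t ≤ lam * mu := by omega
        have ht : t ≤ mu := Nat.le_of_mul_le_mul_left hmul C.lampos
        have : mu * 2 ≤ t := by
          have : mu * 2 ≤ mu * (k + 1 + 1) := by
            apply Nat.mul_le_mul_left
            omega
          omega
        omega
  · rintro (hℓ | hℓ)
    · exact ⟨lam, 0, ℓ, 0, by ring, hℓ, (Lp_zero h1 h2).mpr rfl, by ring⟩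
    · exact ⟨0, mu, 0, ℓ, by ring, (Lp_zero h1 h2).mpr rfl, hℓ, by ring⟩

/-- the pure element `mu * (n1 * n2)` -/
lemma UU_mun1n2 (C : Ctx n1 n2 lam mu) {ℓ : ℕ} :
    ℓ ∈ UU n1 n2 lam mu (mu * (n1 * n2)) ↔ ℓ = n1 ∨ ℓ = n2 := by
  have h1 : 0 < n1 := by have := C.h1; omega
  have h2 : 0 < n2 := by have := C.h2; omega
  have hmupos := C.mupos
  constructor
  · rintro ⟨s, t, ℓ1, ℓ2, hm, hℓ1, hℓ2, rfl⟩
    have hdvd : mu ∣ lam * t := by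
      have d1 : mu ∣ mu * (n1 * n2) := ⟨n1 * n2, rfl⟩
      have d2 : mu ∣ mu * s := ⟨s, rfl⟩
      have e : lam * t = mu * (n1 * n2) - mu * s := by omega
      rw [e]
      exact Nat.dvd_sub d1 d2
    have hdvd2 : mu ∣ t := (Nat.Coprime.dvd_of_dvd_mul_left
      (Nat.Coprime.symm C.hcop2) hdvd)
    obtain ⟨k, hk⟩ := hdvd2
    rcases k with _ | k
    · have ht0 : t = 0 := by omega
      subst ht0
      have : s = n1 * n2 := by
        have e : mu * s = mu * (n1 * n2) := by omega
        exact Nat.eq_of_mul_eq_mul_left hmupos e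
      subst this
      have : ℓ2 = 0 := (Lp_zero h1 h2).mp hℓ2
      subst this
      rw [Nat.add_zero]
      exact (Lp_n1n2 C).mp hℓ1
    · exfalso
      have hmuk : mu ≤ t := by
        have : mu * 1 ≤ mu * (k + 1) := by
          apply Nat.mul_le_mul_left
          omega
        omega
      have hbig : mu * (n1 * n2) < lam * t := by
        have c1 : mu * (n1 * n2) < mu * lam :=
          (Nat.mul_lt_mul_left hmupos).mpr (lt_of_le_of_lt C.mu_big C.hlm)
        have c2 : mu * lam = lam * mu := by ring
        have c3 : lam * mu ≤ lam * t := by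
          apply Nat.mul_le_mul_left
          omega
        omega
      omega
  · rintro (h | h)
    · exact ⟨n1 * n2, 0, n1, 0, by ring, (Lp_n1n2 C).mpr (Or.inl rfl),
        (Lp_zero h1 h2).mpr rfl, by omega⟩
    · exact ⟨n1 * n2, 0, n2, 0, by ring, (Lp_n1n2 C).mpr (Or.inr rfl),
        (Lp_zero h1 h2).mpr rfl, by omega⟩

end Special

section Bridge

/-- sSup of a finite nonempty set of naturals is its max' -/
lemma sSup_eq_max' {S : Set ℕ} (hfin : S.Finite) (hne : S.Nonempty) :
    sSup S = hfin.toFinset.max' (by simpa using hne) := by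
  apply le_antisymm
  · apply csSup_le hne
    intro x hx
    exact Finset.le_max' _ _ (hfin.mem_toFinset.mpr hx)
  · apply le_csSup hfin.bddAbove
    have := Finset.max'_mem hfin.toFinset (by simpa using hne)
    exact hfin.mem_toFinset.mp this

lemma sInf_eq_min' {S : Set ℕ} (hfin : S.Finite) (hne : S.Nonempty) :
    sInf S = hfin.toFinset.min' (by simpa using hne) := by
  apply le_antisymm
  · apply Nat.sInf_le
    have := Finset.min'_mem hfin.toFinset (by simpa using hne)
    exact hfin.mem_toFinset.mp this
  · exact Finset.min'_le _ _ (hfin.mem_toFinset.mpr (Nat.sInf_mem hne))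

end Bridge
section Assembly

variable {n1 n2 lam mu : ℕ}

lemma lengthSet_finite (C : Ctx n1 n2 lam mu) (n : ℕ) :
    (lengthSet ![mu * n1, mu * n2, lam * n1, lam * n2] n).Finite := by
  rw [lengthSet_eq_UU]
  exact UU_finite C n

/-- real-valued LD lower bound from a ℕ gap estimate -/
lemma LD_ge_of_gaps {c M m' a b : ℕ} (hc : 2 ≤ c) (hmM : m' < M) (ha : 0 < a)
    (hcount : b * (M - m') ≤ (c - 1) * a) :
    (b : ℝ) / (a : ℝ) ≤ ((c : ℝ) - 1) / ((M : ℝ) - (m' : ℝ)) := by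
  have hMm : (0 : ℝ) < (M : ℝ) - (m' : ℝ) := by
    have : (m' : ℝ) < M := by exact_mod_cast hmM
    linarith
  have hA : (0 : ℝ) < (a : ℝ) := by exact_mod_cast ha
  rw [div_le_div_iff₀ hA hMm]
  have := (Nat.cast_le (α := ℝ)).mpr hcount
  push_cast [Nat.cast_sub (le_of_lt hmM), Nat.cast_sub (by omega : 1 ≤ c)] at this
  linarith

/-- bland per-element bound -/
lemma bland_LD_bound (C : Ctx n1 n2 lam mu)
    (hbl : n1 * lam + n1 * n2 * (n2 - n1) < n2 * mu) {n : ℕ}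
    (hcard : 2 ≤ (lengthSet ![mu * n1, mu * n2, lam * n1, lam * n2] n).ncard) :
    1 / ((n2 - n1 : ℕ) : ℝ) ≤ LD ![mu * n1, mu * n2, lam * n1, lam * n2] n := by
  have hSU := lengthSet_eq_UU (n1 := n1) (n2 := n2) (lam := lam) (mu := mu) n
  have hfin0 : (lengthSet ![mu * n1, mu * n2, lam * n1, lam * n2] n).Finite :=
    lengthSet_finite C n
  have hfin : (UU n1 n2 lam mu n).Finite := by rwa [hSU] at hfin0
  rw [hSU] at hcard
  have hne : (UU n1 n2 lam mu n).Nonempty := by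
    rcases Set.eq_empty_or_nonempty (UU n1 n2 lam mu n) with h | h
    · rw [h] at hcard; simp at hcard
    · exact h
  have hTne : hfin.toFinset.Nonempty := by simpa using hne
  have hTcard : (UU n1 n2 lam mu n).ncard = hfin.toFinset.card :=
    Set.ncard_eq_toFinset_card _ hfin
  have hgap : ∀ b ∈ hfin.toFinset, (∃ a ∈ hfin.toFinset, a < b) →
      ∃ a ∈ hfin.toFinset, a < b ∧ b ≤ a + (n2 - n1) := by
    rintro b hb ⟨a, ha, hab⟩
    obtain ⟨a', ha', h1, h2⟩ := bland_main C hbl (hfin.mem_toFinset.mp hb)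
      ⟨a, hfin.mem_toFinset.mp ha, hab⟩
    exact ⟨a', hfin.mem_toFinset.mpr ha', h1, h2⟩
  have hcount := count_gap (n2 - n1) hfin.toFinset.card hfin.toFinset hTne le_rfl hgap
  have hmM : hfin.toFinset.min' hTne < hfin.toFinset.max' hTne :=
    Finset.min'_lt_max'_of_card _ (by omega)
  unfold LD
  rw [hSU, sSup_eq_max' hfin hne, sInf_eq_min' hfin hne, hTcard]
  have h12 := C.h12
  have hc2 : 2 ≤ hfin.toFinset.card := by omega
  have hcount' : 1 * (hfin.toFinset.max' hTne - hfin.toFinset.min' hTne) ≤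
      (hfin.toFinset.card - 1) * (n2 - n1) := by rw [one_mul]; exact hcount
  have := LD_ge_of_gaps hc2 hmM (by omega : 0 < n2 - n1) hcount'
  simpa using this

/-- tasty per-element bound -/
lemma tasty_LD_bound (C : Ctx n1 n2 lam mu)
    (ht : n2 * mu + n1 * n2 * (n2 - n1) < n1 * lam) {n : ℕ}
    (hcard : 2 ≤ (lengthSet ![mu * n1, mu * n2, lam * n1, lam * n2] n).ncard) :
    2 / ((2 * (mL n1 n2 lam - xL n1 n2 mu) - 1 : ℕ) : ℝ) ≤
      LD ![mu * n1, mu * n2, lam * n1, lam * n2] n := by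
  classical
  have hDgt := Dgt C ht
  have h12 := C.h12
  set D := mL n1 n2 lam - xL n1 n2 mu with hD
  have hD2 : 2 ≤ D := by omega
  have hSU := lengthSet_eq_UU (n1 := n1) (n2 := n2) (lam := lam) (mu := mu) n
  have hfin0 : (lengthSet ![mu * n1, mu * n2, lam * n1, lam * n2] n).Finite :=
    lengthSet_finite C n
  have hfin : (UU n1 n2 lam mu n).Finite := by rwa [hSU] at hfin0
  rw [hSU] at hcard
  have hne : (UU n1 n2 lam mu n).Nonempty := by
    rcases Set.eq_empty_or_nonempty (UU n1 n2 lam mu n) with h | h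
    · rw [h] at hcard; simp at hcard
    · exact h
  have hTne : hfin.toFinset.Nonempty := by simpa using hne
  have hTcard : (UU n1 n2 lam mu n).ncard = hfin.toFinset.card :=
    Set.ncard_eq_toFinset_card _ hfin
  -- the bad predicate
  set P : ℕ → Prop := fun b => ∃ s t, mu * s + lam * t = n ∧
    b = mL n1 n2 s + mL n1 n2 t ∧ t ≤ 2 * n1 * n2 - n1 - n2 ∧
    b + (n2 - n1) ∈ UU n1 n2 lam mu n ∧ ∃ a ∈ UU n1 n2 lam mu n, a < b with hP
  have hgap : ∀ b ∈ hfin.toFinset, (∃ a ∈ hfin.toFinset, a < b) →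
      (∃ a ∈ hfin.toFinset, a < b ∧ b + 1 ≤ a + D) ∨
      (P b ∧ ∃ a ∈ hfin.toFinset, a < b ∧ b ≤ a + D) := by
    rintro b hb ⟨a, ha, hab⟩
    rcases tasty_key C ht (hfin.mem_toFinset.mp hb) ⟨a, hfin.mem_toFinset.mp ha, hab⟩ with
      ⟨a', ha', h1, h2⟩ | ⟨s, t, hst, hbeq, htF, hb0, a', ha', h1, h2⟩
    · exact Or.inl ⟨a', hfin.mem_toFinset.mpr ha', h1, h2⟩
    · exact Or.inr ⟨⟨s, t, hst, hbeq, htF, hb0, a', ha', h1⟩,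
        a', hfin.mem_toFinset.mpr ha', h1, h2⟩
  have hcount := count_gapD D hfin.toFinset.card hfin.toFinset P hTne le_rfl hgap
  -- at most one bad element
  have hPle1 : (hfin.toFinset.filter P).card ≤ 1 := by
    apply Finset.card_le_one.mpr
    intro b hb b' hb'
    obtain ⟨s, t, hst, hbeq, htF, -, -⟩ := (Finset.mem_filter.mp hb).2
    obtain ⟨s', t', hst', hbeq', htF', -, -⟩ := (Finset.mem_filter.mp hb').2
    have hmu := C.hmu
    have htteq : t = t' := by
      rcases le_total t t' with hle | hle
      · obtain ⟨k, hk1, hk2⟩ := block_rel C (hst.trans hst'.symm) hle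
        rcases k with _ | k
        · omega
        · exfalso
          have : mu * 1 ≤ mu * (k + 1) := Nat.mul_le_mul_left _ (by omega)
          have e : (k + 1) * mu = mu * (k + 1) := by ring
          omega
      · obtain ⟨k, hk1, hk2⟩ := block_rel C (hst'.trans hst.symm) hle
        rcases k with _ | k
        · omega
        · exfalso
          have : mu * 1 ≤ mu * (k + 1) := Nat.mul_le_mul_left _ (by omega)
          have e : (k + 1) * mu = mu * (k + 1) := by ring
          omega
    subst htteq
    have : s = s' := block_cancel C hst hst'
    subst this
    omega
  -- if a bad element exists then at least 3 elements
  have hcard3 : (hfin.toFinset.filter P).card = 1 → 3 ≤ hfin.toFinset.card := by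
    intro h1
    obtain ⟨b, hbmem⟩ := Finset.card_eq_one.mp h1
    have hb := Finset.mem_filter.mp (by rw [hbmem]; exact Finset.mem_singleton_self b)
    obtain ⟨s, t, hst, hbeq, htF, hb0, a, haU, hab⟩ := hb.2
    have hsub : ({a, b, b + (n2 - n1)} : Finset ℕ) ⊆ hfin.toFinset := by
      intro x hx
      simp only [Finset.mem_insert, Finset.mem_singleton] at hx
      rcases hx with rfl | rfl | rfl
      · exact hfin.mem_toFinset.mpr haU
      · exact hb.1
      · exact hfin.mem_toFinset.mpr hb0
    have hc3 : ({a, b, b + (n2 - n1)} : Finset ℕ).card = 3 := by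
      rw [Finset.card_insert_of_notMem (by simp; omega),
        Finset.card_insert_of_notMem (by simp; omega), Finset.card_singleton]
    calc 3 = ({a, b, b + (n2 - n1)} : Finset ℕ).card := hc3.symm
      _ ≤ hfin.toFinset.card := Finset.card_le_card hsub
  -- combine: 2 * spread ≤ (card - 1) * (2D - 1)
  have hmain : 2 * (hfin.toFinset.max' hTne - hfin.toFinset.min' hTne) ≤
      (hfin.toFinset.card - 1) * (2 * D - 1) := by
    set c := hfin.toFinset.card with hc
    have hc2 : 2 ≤ c := by omega
    set e := c - 1 with he
    have he1 : 1 ≤ e := by omega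
    have l1 : e * (2 * D - 1) = 2 * (e * (D - 1)) + e := by
      have h' : 2 * D - 1 = 2 * (D - 1) + 1 := by omega
      rw [h']
      ring
    rcases Nat.eq_zero_or_pos ((hfin.toFinset.filter P).card) with h0 | h0
    · omega
    · have hfc1 : (hfin.toFinset.filter P).card = 1 := by omega
      have h3 := hcard3 hfc1
      omega
  have hmM : hfin.toFinset.min' hTne < hfin.toFinset.max' hTne :=
    Finset.min'_lt_max'_of_card _ (by omega)
  unfold LD
  rw [hSU, sSup_eq_max' hfin hne, sInf_eq_min' hfin hne, hTcard]
  have hc2' : 2 ≤ hfin.toFinset.card := by omega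
  have hapos : 0 < 2 * D - 1 := by omega
  exact LD_ge_of_gaps hc2' hmM hapos hmain

/-- the big gap is attained at `lam * mu` -/
lemma tasty_Delta_mem (C : Ctx n1 n2 lam mu)
    (ht : n2 * mu + n1 * n2 * (n2 - n1) < n1 * lam) :
    (mL n1 n2 lam - xL n1 n2 mu) ∈ Delta ![mu * n1, mu * n2, lam * n1, lam * n2] := by
  have hDgt := Dgt C ht
  have h12 := C.h12
  have hn1 := C.hn1
  apply Set.mem_iUnion.mpr
  refine ⟨lam * mu, ?_⟩
  unfold delta deltaOf
  rw [lengthSet_eq_UU]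
  refine ⟨xL n1 n2 mu, (UU_lammu C).mpr (Or.inr (xL_mem hn1 h12 C.mune)),
    mL n1 n2 lam, (UU_lammu C).mpr (Or.inl (mL_mem C.lamne)), by omega, ?_, rfl⟩
  intro cc hcc
  rcases (UU_lammu C).mp hcc with h | h
  · have := mL_le h
    omega
  · have := le_xL hn1 h12 h
    omega

/-- bland: `d0` is attained -/
lemma bland_Delta_mem (C : Ctx n1 n2 lam mu) :
    (n2 - n1) ∈ Delta ![mu * n1, mu * n2, lam * n1, lam * n2] := by
  have h12 := C.h12
  apply Set.mem_iUnion.mpr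
  refine ⟨mu * (n1 * n2), ?_⟩
  unfold delta deltaOf
  rw [lengthSet_eq_UU]
  refine ⟨n1, (UU_mun1n2 C).mpr (Or.inl rfl), n2, (UU_mun1n2 C).mpr (Or.inr rfl),
    h12, ?_, rfl⟩
  intro cc hcc
  rcases (UU_mun1n2 C).mp hcc with h | h <;> omega

/-- bland: all gaps are at most `d0` -/
lemma bland_Delta_ub (C : Ctx n1 n2 lam mu)
    (hbl : n1 * lam + n1 * n2 * (n2 - n1) < n2 * mu) :
    ∀ dd ∈ Delta ![mu * n1, mu * n2, lam * n1, lam * n2], dd ≤ n2 - n1 := by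
  intro dd hdd
  obtain ⟨n, hn⟩ := Set.mem_iUnion.mp hdd
  unfold delta deltaOf at hn
  rw [lengthSet_eq_UU] at hn
  obtain ⟨a, haU, b, hbU, hab, hcons, rfl⟩ := hn
  obtain ⟨a', ha', h1, h2⟩ := bland_main C hbl hbU ⟨a, haU, hab⟩
  have : ¬(a < a' ∧ a' < b) := hcons a' ha'
  omega

lemma sSup_Delta_bland (C : Ctx n1 n2 lam mu)
    (hbl : n1 * lam + n1 * n2 * (n2 - n1) < n2 * mu) :
    sSup (Delta ![mu * n1, mu * n2, lam * n1, lam * n2]) = n2 - n1 := by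
  apply le_antisymm
  · exact csSup_le ⟨n2 - n1, bland_Delta_mem C⟩ (bland_Delta_ub C hbl)
  · exact le_csSup ⟨n2 - n1, bland_Delta_ub C hbl⟩ (bland_Delta_mem C)

/-- the bland witness element -/
lemma bland_LD_witness (C : Ctx n1 n2 lam mu) :
    2 ≤ (lengthSet ![mu * n1, mu * n2, lam * n1, lam * n2] (mu * (n1 * n2))).ncard ∧
    LD ![mu * n1, mu * n2, lam * n1, lam * n2] (mu * (n1 * n2)) =
      1 / ((n2 - n1 : ℕ) : ℝ) := by
  have h12 := C.h12
  have hset : lengthSet ![mu * n1, mu * n2, lam * n1, lam * n2] (mu * (n1 * n2)) =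
      ({n1, n2} : Set ℕ) := by
    rw [lengthSet_eq_UU]
    ext ℓ
    rw [UU_mun1n2 C]
    simp [Set.mem_insert_iff]
  constructor
  · rw [hset, Set.ncard_pair (by omega : n1 ≠ n2)]
  · unfold LD
    rw [hset, Set.ncard_pair (by omega : n1 ≠ n2)]
    rw [csSup_pair, csInf_pair]
    have e1 : n1 ⊔ n2 = n2 := max_eq_right (le_of_lt h12)
    have e2 : n1 ⊓ n2 = n1 := min_eq_left (le_of_lt h12)
    rw [e1, e2]
    have e3 : ((n2 - n1 : ℕ) : ℝ) = (n2 : ℝ) - (n1 : ℝ) := by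
      rw [Nat.cast_sub (le_of_lt h12)]
    rw [e3]
    norm_num

/-- bland: LDsgp equals 1/d0 -/
lemma bland_LDsgp (C : Ctx n1 n2 lam mu)
    (hbl : n1 * lam + n1 * n2 * (n2 - n1) < n2 * mu) :
    LDsgp ![mu * n1, mu * n2, lam * n1, lam * n2] = 1 / ((n2 - n1 : ℕ) : ℝ) := by
  obtain ⟨hw1, hw2⟩ := bland_LD_witness C
  have hmem : 1 / ((n2 - n1 : ℕ) : ℝ) ∈
      {x : ℝ | ∃ n : ℕ, 2 ≤ (lengthSet ![mu * n1, mu * n2, lam * n1, lam * n2] n).ncard ∧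
        x = LD ![mu * n1, mu * n2, lam * n1, lam * n2] n} :=
    ⟨mu * (n1 * n2), hw1, hw2.symm⟩
  have hlb : ∀ x ∈ {x : ℝ | ∃ n : ℕ,
      2 ≤ (lengthSet ![mu * n1, mu * n2, lam * n1, lam * n2] n).ncard ∧
      x = LD ![mu * n1, mu * n2, lam * n1, lam * n2] n},
      1 / ((n2 - n1 : ℕ) : ℝ) ≤ x := by
    rintro x ⟨n, hn1', rfl⟩
    exact bland_LD_bound C hbl hn1'
  unfold LDsgp
  exact le_antisymm (csInf_le ⟨_, hlb⟩ hmem) (le_csInf ⟨_, hmem⟩ hlb)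

/-- tasty: LDsgp is at least 2/(2D-1) -/
lemma tasty_LDsgp (C : Ctx n1 n2 lam mu)
    (ht : n2 * mu + n1 * n2 * (n2 - n1) < n1 * lam) :
    2 / ((2 * (mL n1 n2 lam - xL n1 n2 mu) - 1 : ℕ) : ℝ) ≤
      LDsgp ![mu * n1, mu * n2, lam * n1, lam * n2] := by
  have hDgt := Dgt C ht
  have h12 := C.h12
  have hn1 := C.hn1
  -- nonempty: the element lam * mu has at least two lengths
  have hw : 2 ≤ (lengthSet ![mu * n1, mu * n2, lam * n1, lam * n2] (lam * mu)).ncard := by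
    rw [lengthSet_eq_UU]
    have hsub : ({xL n1 n2 mu, mL n1 n2 lam} : Set ℕ) ⊆ UU n1 n2 lam mu (lam * mu) := by
      intro x hx
      rcases hx with rfl | hx
      · exact (UU_lammu C).mpr (Or.inr (xL_mem hn1 h12 C.mune))
      · rcases hx with rfl
        exact (UU_lammu C).mpr (Or.inl (mL_mem C.lamne))
    calc 2 = ({xL n1 n2 mu, mL n1 n2 lam} : Set ℕ).ncard :=
          (Set.ncard_pair (by omega : xL n1 n2 mu ≠ mL n1 n2 lam)).symm
      _ ≤ (UU n1 n2 lam mu (lam * mu)).ncard :=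
          Set.ncard_le_ncard hsub (UU_finite C _)
  unfold LDsgp
  refine le_csInf ⟨LD ![mu * n1, mu * n2, lam * n1, lam * n2] (lam * mu), lam * mu, hw, rfl⟩ ?_
  rintro x ⟨n, hn', rfl⟩
  exact tasty_LD_bound C ht hn'

end Assembly
theorem stmt18 (n1 n2 : ℕ) (h1 : 1 < n1) (h12 : n1 < n2)
    (hcop : Nat.Coprime n1 n2)
    (lam mu : ℕ) (hmu : 2 * n1 * n2 - n1 - n2 < mu) (hlm : mu < lam)
    (hcop2 : Nat.Coprime lam mu) :
    (n2 * mu + n1 * n2 * (n2 - n1) < n1 * lam →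
        Tasty ![mu * n1, mu * n2, lam * n1, lam * n2]) ∧
      (n1 * lam + n1 * n2 * (n2 - n1) < n2 * mu →
        Bland ![mu * n1, mu * n2, lam * n1, lam * n2]) := by
  have C : Ctx n1 n2 lam mu := ⟨h1, h12, hcop, hmu, hlm, hcop2⟩
  constructor
  · intro ht
    unfold Tasty
    have hDgt := Dgt C ht
    set D := mL n1 n2 lam - xL n1 n2 mu with hD
    have hD2 : 2 ≤ D := by omega
    have hlow := tasty_LDsgp C ht
    rw [← hD] at hlow
    have hcast : ((2 * D - 1 : ℕ) : ℝ) = 2 * (D : ℝ) - 1 := by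
      push_cast [Nat.cast_sub (by omega : 1 ≤ 2 * D)]
      ring
    have hpos : (0 : ℝ) < 2 / ((2 * D - 1 : ℕ) : ℝ) := by
      apply div_pos (by norm_num)
      rw [hcast]
      have : (2 : ℝ) ≤ (D : ℝ) := by exact_mod_cast hD2
      linarith
    rcases em (BddAbove (Delta ![mu * n1, mu * n2, lam * n1, lam * n2])) with hbdd | hbdd
    · have hDle : D ≤ sSup (Delta ![mu * n1, mu * n2, lam * n1, lam * n2]) :=
        le_csSup hbdd (tasty_Delta_mem C ht)
      have hDpos : (0 : ℝ) < (D : ℝ) := by exact_mod_cast (by omega : 0 < D)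
      have h1' : (1 : ℝ) / ((sSup (Delta ![mu * n1, mu * n2, lam * n1, lam * n2]) : ℕ) : ℝ) ≤
          1 / (D : ℝ) := by
        apply one_div_le_one_div_of_le hDpos
        exact_mod_cast hDle
      have h2' : (1 : ℝ) / (D : ℝ) < 2 / ((2 * D - 1 : ℕ) : ℝ) := by
        rw [hcast, div_lt_div_iff₀ hDpos (by
          have : (2 : ℝ) ≤ (D : ℝ) := by exact_mod_cast hD2
          linarith)]
        have : (2 : ℝ) ≤ (D : ℝ) := by exact_mod_cast hD2
        linarith
      linarith
    · have hz : sSup (Delta ![mu * n1, mu * n2, lam * n1, lam * n2]) = 0 := by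
        rw [csSup_of_not_bddAbove hbdd, csSup_empty]
        rfl
      rw [hz]
      simp only [Nat.cast_zero, div_zero]
      linarith
  · intro hbl
    unfold Bland
    rw [sSup_Delta_bland C hbl, bland_LDsgp C hbl]

end LengthDensity
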